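/- arXiv:1810.05578 — 8 statements merged into one kernel-verified Lean document; each statement's English description precedes it below -/
import Mathlib

section
/- For probability vectors p and r, there exists a thermal process T ∈ TP(d,s) with T p = r if and only if p thermomajorizes r, i.e., f_p(x) ≥ f_r(x) for all x ∈ [0,Z]. -/
/-- The set of thermal processes. -/
def TP (d : ℕ) (s : Fin d → ℝ) : Set (Matrix (Fin d) (Fin d) ℝ) :=
  {T | (∀ i j, 0 ≤ T i j) ∧ (∀ j, ∑ i, T i j = 1) ∧
    T.mulVec (fun i => s i / ∑ k, s k) = (fun i => s i / ∑ k, s k)}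

/-- A probability vector. -/
def ProbVec (d : ℕ) (p : Fin d → ℝ) : Prop := (∀ i, 0 ≤ p i) ∧ ∑ i, p i = 1

/-- The thermomajorization curve of `p`:
`f_p(x) = max { ∑ i, λ i * p i : λ ∈ [0,1]^d, ∑ i, λ i * s i = x }`. -/
noncomputable def curve (d : ℕ) (s p : Fin d → ℝ) (x : ℝ) : ℝ :=
  sSup {y | ∃ lam : Fin d → ℝ, (∀ i, lam i ∈ Set.Icc (0 : ℝ) 1) ∧
    (∑ i, lam i * s i = x) ∧ y = ∑ i, lam i * p i}

/-!
The curve `f_p` is attained by the greedy filling that takes the states in decreasing order of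
`p i / s i`; optimality is Abel summation against this decreasing ratio.

If `T` is thermal, `λ ↦ λᵀ T` maps the feasible `λ` of `T p` at level `x` to feasible `λ` of
`p` with the same value, so `f_{T p} ≤ f_p`.

Conversely, `{T p | T ∈ TP}` is compact and convex, so by Hahn–Banach it suffices to find, for
each linear functional `a`, a thermal `T` with `a ⬝ r ≤ a ⬝ T p`. Order the states so that `a`
decreases and let `X k` be the Gibbs weight of the first `k` of them. Give `T` the rows that
carry the greedy filling of `f_p` from level `X k` to `X (k + 1)`: then the partial sums of
`T p` in this order are `f_p (X k) ≥ f_r (X k)`, which dominate the partial sums of `r`, and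
Abel summation against the decreasing `a` concludes.
-/

open Finset Matrix

section PartialSum

variable {d : ℕ} {M : Type*}

def partialSum [AddCommMonoid M] (σ : Equiv.Perm (Fin d)) (f : Fin d → M) (k : ℕ) : M :=
  ∑ m ∈ range k, if h : m < d then f (σ ⟨m, h⟩) else 0

variable (σ : Equiv.Perm (Fin d))

@[simp]
lemma partialSum_zero [AddCommMonoid M] (f : Fin d → M) : partialSum σ f 0 = 0 := by
  simp [partialSum]

lemma partialSum_succ [AddCommMonoid M] (f : Fin d → M) {m : ℕ} (hm : m < d) :
    partialSum σ f (m + 1) = partialSum σ f m + f (σ ⟨m, hm⟩) := by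
  simp [partialSum, sum_range_succ, hm]

lemma partialSum_symm_succ [AddCommMonoid M] (f : Fin d → M) (j : Fin d) :
    partialSum σ f (σ.symm j + 1) = partialSum σ f (σ.symm j) + f j := by
  simp [partialSum_succ σ f (σ.symm j).isLt]

lemma partialSum_self [AddCommMonoid M] (f : Fin d → M) : partialSum σ f d = ∑ i, f i := by
  rw [partialSum, ← Equiv.sum_comp σ f]
  exact (sum_fin_eq_sum_range fun i => f (σ i)).symm

lemma partialSum_sub [AddCommGroup M] (f g : Fin d → M) (k : ℕ) :
    partialSum σ (f - g) k = partialSum σ f k - partialSum σ g k := by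
  simp only [partialSum, ← sum_sub_distrib]
  exact sum_congr rfl fun m _ => by split_ifs <;> simp

lemma partialSum_telescope [AddCommGroup M] (u : ℕ → M) {k : ℕ} (hk : k ≤ d) :
    partialSum σ (fun i => u (σ.symm i + 1) - u (σ.symm i)) k = u k - u 0 := by
  rw [partialSum, ← sum_range_sub]
  refine sum_congr rfl fun m hm => ?_
  simp [(mem_range.1 hm).trans_le hk]

lemma partialSum_le_partialSum {f g : Fin d → ℝ} (hfg : f ≤ g) (k : ℕ) :
    partialSum σ f k ≤ partialSum σ g k :=
  sum_le_sum fun m _ => by split_ifs <;> simp [hfg _]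

lemma partialSum_mono {f : Fin d → ℝ} (hf : 0 ≤ f) : Monotone (partialSum σ f) :=
  fun _ _ hkk' => sum_le_sum_of_subset_of_nonneg (range_subset_range.2 hkk')
    fun m _ _ => by split_ifs; exacts [hf _, le_rfl]

lemma partialSum_mem_Icc {f : Fin d → ℝ} (hf : 0 ≤ f) {k : ℕ} (hk : k ≤ d) :
    partialSum σ f k ∈ Set.Icc 0 (∑ i, f i) := by
  simpa [partialSum_self] using
    And.intro (partialSum_mono σ hf k.zero_le) (partialSum_mono σ hf hk)

lemma sum_ite_lt_eq_partialSum [AddCommMonoid M] (f : Fin d → M) {k : ℕ} (hk : k ≤ d) :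
    ∑ j, (if (σ.symm j : ℕ) < k then f j else 0) = partialSum σ f k := by
  rw [← Equiv.sum_comp σ, sum_fin_eq_sum_range, ← sum_range_add_sum_Ico _ hk, partialSum]
  rw [sum_eq_zero (s := Ico k d) fun m hm => by simp [(mem_Ico.1 hm).1.not_gt], add_zero]
  refine sum_congr rfl fun m hm => ?_
  simp [mem_range.1 hm, (mem_range.1 hm).trans_le hk]

/-- Abel summation. -/
lemma sum_mul_le_sum_mul_of_partialSum_le {f g v : Fin d → ℝ}
    (hfg : ∀ k ≤ d, partialSum σ g k ≤ partialSum σ f k) (hsum : ∑ i, g i = ∑ i, f i)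
    (hv : Antitone (v ∘ σ)) : ∑ i, g i * v i ≤ ∑ i, f i * v i := by
  set v' : ℕ → ℝ := fun m => if h : m < d then v (σ ⟨m, h⟩) else 0
  set c' : ℕ → ℝ := fun m => if h : m < d then (f - g) (σ ⟨m, h⟩) else 0
  have hpairing : ∑ i, f i * v i - ∑ i, g i * v i = ∑ m ∈ range d, v' m • c' m := by
    rw [← sum_sub_distrib, ← Equiv.sum_comp σ, sum_fin_eq_sum_range]
    refine sum_congr rfl fun m hm => ?_
    simp only [v', c', dif_pos (mem_range.1 hm), Pi.sub_apply, smul_eq_mul]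
    ring
  have hterm :
      ∀ m ∈ range (d - 1), (v' (m + 1) - v' m) • partialSum σ (f - g) (m + 1) ≤ 0 := by
    intro m hmem
    have hm : m + 1 < d := by have := mem_range.1 hmem; omega
    refine smul_nonpos_of_nonpos_of_nonneg ?_ ?_
    · simpa [v', hm, (Nat.lt_succ_self m).trans hm] using
        hv (Nat.le_succ m : (⟨m, _⟩ : Fin d) ≤ ⟨m + 1, hm⟩)
    · rw [partialSum_sub]; exact sub_nonneg.2 (hfg _ hm.le)
  have htotal : partialSum σ (f - g) d = 0 := by
    rw [partialSum_sub, partialSum_self, partialSum_self, hsum, sub_self]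
  have hG : ∀ n, ∑ m ∈ range n, c' m = partialSum σ (f - g) n := fun _ => rfl
  rw [← sub_nonneg, hpairing, sum_range_by_parts]
  simp only [hG, htotal, smul_zero, zero_sub, neg_nonneg]
  exact sum_nonpos hterm

end PartialSum

lemma exists_perm_antitone_comp {d : ℕ} {α : Type*} [LinearOrder α] (f : Fin d → α) :
    ∃ σ : Equiv.Perm (Fin d), Antitone (f ∘ σ) :=
  ⟨Tuple.sort (OrderDual.toDual ∘ f), monotone_toDual_comp_iff.1 (Tuple.monotone_sort _)⟩

lemma clamp_mul_eq_min_sub_min {x a c : ℝ} (hc : 0 < c) :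
    min 1 (max 0 ((x - a) / c)) * c = min x (a + c) - min x a := by
  rcases le_total x a with hxa | hax
  · have : (x - a) / c ≤ 0 := div_nonpos_of_nonpos_of_nonneg (by linarith) hc.le
    simp [this, hxa, show x ≤ a + c by linarith]
  rcases le_total x (a + c) with hxc | hcx
  · have h0 : 0 ≤ (x - a) / c := div_nonneg (by linarith) hc.le
    have h1 : (x - a) / c ≤ 1 := (div_le_one hc).2 (by linarith)
    rw [max_eq_right h0, min_eq_right h1, div_mul_cancel₀ _ hc.ne', min_eq_left hxc,
      min_eq_right hax]
  · have h1 : 1 ≤ (x - a) / c := (one_le_div hc).2 (by linarith)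
    rw [max_eq_right (zero_le_one.trans h1), min_eq_left h1, min_eq_right hcx, min_eq_right hax]
    ring

section Greedy

variable {d : ℕ} {s : Fin d → ℝ} (τ : Equiv.Perm (Fin d))

/-- Fill the weight budget `x` in the order `τ`: the state `τ m` receives the fraction of its
weight `s (τ m)` that falls into `[0, x]` once the states before it have been filled. -/
noncomputable def greedy (s : Fin d → ℝ) (x : ℝ) (j : Fin d) : ℝ :=
  min 1 (max 0 ((x - partialSum τ s (τ.symm j)) / s j))

lemma greedy_mem_Icc (x : ℝ) (j : Fin d) : greedy τ s x j ∈ Set.Icc (0 : ℝ) 1 :=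
  ⟨le_min zero_le_one (le_max_left _ _), min_le_left _ _⟩

variable (hs : ∀ i, 0 < s i)
include hs

lemma greedy_mono (j : Fin d) : Monotone fun x => greedy τ s x j := fun x x' hxx' => by
  unfold greedy
  have := div_le_div_of_nonneg_right (sub_le_sub_right hxx' (partialSum τ s (τ.symm j)))
    (hs j).le
  exact min_le_min le_rfl (max_le_max le_rfl this)

lemma greedy_zero : greedy τ s 0 = 0 := funext fun j => by
  have : (0 - partialSum τ s (τ.symm j)) / s j ≤ 0 :=
    div_nonpos_of_nonpos_of_nonneg
      (by linarith [(partialSum_mem_Icc τ (fun i => (hs i).le) (τ.symm j).isLt.le).1]) (hs j).le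
  rw [Pi.zero_apply, greedy, max_eq_left this, min_eq_right zero_le_one]

lemma greedy_mul_eq (x : ℝ) (j : Fin d) :
    greedy τ s x j * s j =
      min x (partialSum τ s (τ.symm j + 1)) - min x (partialSum τ s (τ.symm j)) := by
  rw [greedy, clamp_mul_eq_min_sub_min (hs j), partialSum_symm_succ]

lemma partialSum_greedy_mul {x : ℝ} (hx : 0 ≤ x) {k : ℕ} (hk : k ≤ d) :
    partialSum τ (fun j => greedy τ s x j * s j) k = min x (partialSum τ s k) := by
  simp_rw [greedy_mul_eq τ hs]
  rw [partialSum_telescope τ (fun k => min x (partialSum τ s k)) hk, partialSum_zero,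
    min_eq_right hx, sub_zero]

lemma greedy_sum : greedy τ s (∑ i, s i) = 1 := funext fun j => by
  have hle : ∀ k ≤ d, partialSum τ s k ≤ ∑ i, s i :=
    fun k hk => (partialSum_mem_Icc τ (fun i => (hs i).le) hk).2
  refine mul_right_cancel₀ (hs j).ne' ?_
  rw [greedy_mul_eq τ hs, min_eq_right (hle _ (τ.symm j).isLt),
    min_eq_right (hle _ (τ.symm j).isLt.le), partialSum_symm_succ, Pi.one_apply, one_mul,
    add_sub_cancel_left]

lemma sum_greedy_mul {x : ℝ} (hx : x ∈ Set.Icc 0 (∑ i, s i)) :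
    ∑ j, greedy τ s x j * s j = x := by
  rw [← partialSum_self τ, partialSum_greedy_mul τ hs hx.1 le_rfl, partialSum_self,
    min_eq_left hx.2]

variable {τ}

lemma sum_mul_le_sum_greedy_mul {p : Fin d → ℝ} (hτ : Antitone fun i => p (τ i) / s (τ i))
    {x : ℝ} (hx : x ∈ Set.Icc 0 (∑ i, s i)) {μ : Fin d → ℝ}
    (hμ : ∀ i, μ i ∈ Set.Icc (0 : ℝ) 1) (hμs : ∑ i, μ i * s i = x) :
    ∑ i, μ i * p i ≤ ∑ i, greedy τ s x i * p i := by
  have hweights : ∀ (ν : Fin d → ℝ), ∑ i, ν i * p i = ∑ i, ν i * s i * (p i / s i) :=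
    fun ν => sum_congr rfl fun i _ => by field_simp [(hs i).ne']
  rw [hweights, hweights]
  refine sum_mul_le_sum_mul_of_partialSum_le τ (fun k hk => ?_)
    (by rw [hμs, sum_greedy_mul τ hs hx]) hτ
  rw [partialSum_greedy_mul τ hs hx.1 hk]
  refine le_min ?_
    (partialSum_le_partialSum τ (fun i => mul_le_of_le_one_left (hs i).le (hμ i).2) k)
  rw [← hμs]
  exact (partialSum_mem_Icc τ (fun i => mul_nonneg (hμ i).1 (hs i).le) hk).2

end Greedy

section Curve

variable {d : ℕ} {s : Fin d → ℝ} (hs : ∀ i, 0 < s i)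
include hs

lemma curve_eq_sum_greedy_mul {p : Fin d → ℝ} {τ : Equiv.Perm (Fin d)}
    (hτ : Antitone fun i => p (τ i) / s (τ i)) {x : ℝ} (hx : x ∈ Set.Icc 0 (∑ i, s i)) :
    curve d s p x = ∑ i, greedy τ s x i * p i :=
  IsGreatest.csSup_eq ⟨⟨greedy τ s x, greedy_mem_Icc τ x, sum_greedy_mul τ hs hx, rfl⟩,
    by rintro y ⟨μ, hμ, hμs, rfl⟩; exact sum_mul_le_sum_greedy_mul hs hτ hx hμ hμs⟩

lemma sum_mul_le_curve {p : Fin d → ℝ} {x : ℝ} (hx : x ∈ Set.Icc 0 (∑ i, s i))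
    {μ : Fin d → ℝ} (hμ : ∀ i, μ i ∈ Set.Icc (0 : ℝ) 1)
    (hμs : ∑ i, μ i * s i = x) : ∑ i, μ i * p i ≤ curve d s p x := by
  obtain ⟨τ, hτ⟩ := exists_perm_antitone_comp fun i => p i / s i
  rw [curve_eq_sum_greedy_mul hs hτ hx]
  exact sum_mul_le_sum_greedy_mul hs hτ hx hμ hμs

lemma partialSum_le_curve (σ : Equiv.Perm (Fin d)) (p : Fin d → ℝ) {k : ℕ} (hk : k ≤ d) :
    partialSum σ p k ≤ curve d s p (partialSum σ s k) := by
  have hind : ∀ q : Fin d → ℝ,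
      ∑ j, (if (σ.symm j : ℕ) < k then 1 else 0) * q j = partialSum σ q k := fun q => by
    simp_rw [ite_mul, one_mul, zero_mul]
    exact sum_ite_lt_eq_partialSum σ q hk
  rw [← hind p]
  refine sum_mul_le_curve hs (partialSum_mem_Icc σ (fun i => (hs i).le) hk) (fun j => ?_)
    (hind s)
  split_ifs <;> simp

lemma curve_mulVec_le {T : Matrix (Fin d) (Fin d) ℝ} (hT0 : ∀ i j, 0 ≤ T i j)
    (hT1 : ∀ j, ∑ i, T i j = 1) (hTs : T *ᵥ s = s) (p : Fin d → ℝ) {x : ℝ}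
    (hx : x ∈ Set.Icc 0 (∑ i, s i)) : curve d s (T *ᵥ p) x ≤ curve d s p x := by
  obtain ⟨τ, hτ⟩ := exists_perm_antitone_comp fun i => (T *ᵥ p) i / s i
  set g := greedy τ s x
  have hgT : ∀ j, ∑ i, g i * T i j ∈ Set.Icc (0 : ℝ) 1 := fun j =>
    ⟨sum_nonneg fun i _ => mul_nonneg (greedy_mem_Icc τ x i).1 (hT0 i j),
      (sum_le_sum fun i _ => mul_le_of_le_one_left (hT0 i j) (greedy_mem_Icc τ x i).2).trans
        (hT1 j).le⟩
  have hgTs : (g ᵥ* T) ⬝ᵥ s = x := by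
    rw [← dotProduct_mulVec, hTs]; exact sum_greedy_mul τ hs hx
  calc curve d s (T *ᵥ p) x = g ⬝ᵥ (T *ᵥ p) := curve_eq_sum_greedy_mul hs hτ hx
    _ = (g ᵥ* T) ⬝ᵥ p := dotProduct_mulVec g T p
    _ ≤ curve d s p x := sum_mul_le_curve hs hx hgT hgTs

end Curve

section StairMatrix

variable {d : ℕ} (σ : Equiv.Perm (Fin d)) (w : ℕ → Fin d → ℝ)

def stairMatrix : Matrix (Fin d) (Fin d) ℝ :=
  Matrix.of fun i => w (σ.symm i + 1) - w (σ.symm i)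

lemma stairMatrix_nonneg (hw : Monotone w) (i j : Fin d) : 0 ≤ stairMatrix σ w i j :=
  sub_nonneg.2 (hw (Nat.le_succ _) j)

lemma sum_stairMatrix_apply (j : Fin d) : ∑ i, stairMatrix σ w i j = w d j - w 0 j := by
  rw [← partialSum_self σ]
  exact partialSum_telescope σ (fun k => w k j) le_rfl

lemma stairMatrix_mulVec_apply (q : Fin d → ℝ) (i : Fin d) :
    (stairMatrix σ w *ᵥ q) i = w (σ.symm i + 1) ⬝ᵥ q - w (σ.symm i) ⬝ᵥ q :=
  sub_dotProduct _ _ q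

lemma partialSum_stairMatrix_mulVec (q : Fin d → ℝ) {k : ℕ} (hk : k ≤ d) :
    partialSum σ (stairMatrix σ w *ᵥ q) k = w k ⬝ᵥ q - w 0 ⬝ᵥ q := by
  rw [show stairMatrix σ w *ᵥ q = _ from funext (stairMatrix_mulVec_apply σ w q)]
  exact partialSum_telescope σ (fun k => w k ⬝ᵥ q) hk

end StairMatrix

lemma mem_of_forall_exists_dotProduct_le {ι : Type*} [Fintype ι] [DecidableEq ι]
    {S : Set (ι → ℝ)} (hconv : Convex ℝ S) (hclosed : IsClosed S) {r : ι → ℝ}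
    (h : ∀ a : ι → ℝ, ∃ q ∈ S, a ⬝ᵥ r ≤ a ⬝ᵥ q) : r ∈ S := by
  by_contra hr
  obtain ⟨f, u, hfS, hfr⟩ := geometric_hahn_banach_closed_point hconv hclosed hr
  have hf : ∀ q, f q = (fun i => f fun j => if i = j then 1 else 0) ⬝ᵥ q := fun q => by
    rw [dotProduct_comm]
    exact LinearMap.pi_apply_eq_sum_univ f.toLinearMap q
  obtain ⟨q, hq, hle⟩ := h _
  linarith [hfS q hq, hf q, hf r]

section ThermalProcess

variable {d : ℕ} {s : Fin d → ℝ}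

lemma gibbs_eq_smul : (fun i => s i / ∑ k, s k) = (∑ k, s k)⁻¹ • s :=
  funext fun i => div_eq_inv_mul (s i) _

lemma mulVec_eq_of_mem_TP (hZ : ∑ i, s i ≠ 0) {T : Matrix (Fin d) (Fin d) ℝ}
    (hT : T ∈ TP d s) : T *ᵥ s = s := by
  have := hT.2.2
  rwa [gibbs_eq_smul, mulVec_smul, smul_right_inj (inv_ne_zero hZ)] at this

lemma mem_TP_of_mulVec_eq {T : Matrix (Fin d) (Fin d) ℝ} (hT0 : ∀ i j, 0 ≤ T i j)
    (hT1 : ∀ j, ∑ i, T i j = 1) (hTs : T *ᵥ s = s) : T ∈ TP d s :=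
  ⟨hT0, hT1, by rw [gibbs_eq_smul, mulVec_smul, hTs]⟩

lemma isCompact_TP : IsCompact (TP d s) := by
  refine (isCompact_univ_pi fun _ => isCompact_univ_pi fun _ => isCompact_Icc).of_isClosed_subset
    ?_ fun T hT i _ j _ =>
      ⟨hT.1 i j, (single_le_sum (fun i' _ => hT.1 i' j) (mem_univ i)).trans (hT.2.1 j).le⟩
  simp only [TP, Set.ofPred_and, Set.ofPred_forall]
  have hentry (i j : Fin d) : Continuous fun T : Matrix (Fin d) (Fin d) ℝ => T i j :=
    continuous_id.matrix_elem i j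
  refine .inter ?_ (.inter ?_ ?_)
  · exact isClosed_iInter fun i => isClosed_iInter fun j =>
      isClosed_le continuous_const (hentry i j)
  · exact isClosed_iInter fun j =>
      isClosed_eq (continuous_finsetSum univ fun i _ => hentry i j) continuous_const
  · exact isClosed_eq (continuous_id.matrix_mulVec continuous_const) continuous_const

lemma convex_TP : Convex ℝ (TP d s) := by
  rintro T ⟨hT0, hT1, hTg⟩ U ⟨hU0, hU1, hUg⟩ α β hα hβ hαβ
  refine ⟨fun i j => ?_, fun j => ?_, ?_⟩
  · simpa using add_nonneg (mul_nonneg hα (hT0 i j)) (mul_nonneg hβ (hU0 i j))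
  · simp [sum_add_distrib, ← mul_sum, hT1 j, hU1 j, hαβ]
  · rw [add_mulVec, smul_mulVec, smul_mulVec, hTg, hUg, ← add_smul, hαβ, one_smul]

variable (hs : ∀ i, 0 < s i)
include hs

lemma exists_mem_TP_dotProduct_le {p r : Fin d → ℝ} (hpr : ∑ i, r i = ∑ i, p i)
    (hcurve : ∀ x ∈ Set.Icc (0 : ℝ) (∑ i, s i), curve d s r x ≤ curve d s p x)
    (a : Fin d → ℝ) : ∃ T ∈ TP d s, a ⬝ᵥ r ≤ a ⬝ᵥ (T *ᵥ p) := by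
  obtain ⟨σ, hσ⟩ := exists_perm_antitone_comp a
  obtain ⟨τ, hτ⟩ := exists_perm_antitone_comp fun i => p i / s i
  have hX : ∀ k ≤ d, partialSum σ s k ∈ Set.Icc 0 (∑ i, s i) := fun k hk =>
    partialSum_mem_Icc σ (fun i => (hs i).le) hk
  set w : ℕ → Fin d → ℝ := fun k => greedy τ s (partialSum σ s k)
  have hw : Monotone w := fun k k' hkk' j =>
    greedy_mono τ hs j (partialSum_mono σ (fun i => (hs i).le) hkk')
  set T := stairMatrix σ w
  have hw0 : w 0 = 0 := by simp only [w, partialSum_zero, greedy_zero τ hs]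
  have hwd : w d = 1 := by simp only [w, partialSum_self, greedy_sum τ hs]
  have hws : ∀ k ≤ d, w k ⬝ᵥ s = partialSum σ s k :=
    fun k hk => sum_greedy_mul τ hs (hX k hk)
  have hTs : T *ᵥ s = s := funext fun i => by
    rw [stairMatrix_mulVec_apply, hws (_ + 1) (σ.symm i).isLt, hws _ (σ.symm i).isLt.le,
      partialSum_symm_succ, add_sub_cancel_left]
  refine ⟨T, mem_TP_of_mulVec_eq (stairMatrix_nonneg σ w hw) (fun j => ?_) hTs, ?_⟩
  · simp [T, sum_stairMatrix_apply, hw0, hwd]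
  have hTp : ∀ k ≤ d, partialSum σ (T *ᵥ p) k = w k ⬝ᵥ p := fun k hk => by
    rw [partialSum_stairMatrix_mulVec σ w p hk, hw0, zero_dotProduct, sub_zero]
  have hdom : ∀ k ≤ d, partialSum σ r k ≤ partialSum σ (T *ᵥ p) k := fun k hk =>
    calc partialSum σ r k ≤ curve d s r (partialSum σ s k) := partialSum_le_curve hs σ r hk
      _ ≤ curve d s p (partialSum σ s k) := hcurve _ (hX k hk)
      _ = partialSum σ (T *ᵥ p) k := by
        rw [hTp k hk, curve_eq_sum_greedy_mul hs hτ (hX k hk)]; rfl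
  have htotal : ∑ i, r i = ∑ i, (T *ᵥ p) i := by
    rw [← partialSum_self σ (T *ᵥ p), hTp d le_rfl, hwd, dotProduct_comm, dotProduct_one, hpr]
  rw [dotProduct_comm a, dotProduct_comm a]
  exact sum_mul_le_sum_mul_of_partialSum_le σ hdom htotal hσ

end ThermalProcess

/-- there is a thermal process mapping `p` to `r` iff `p`
thermomajorizes `r`, i.e. `f_p(x) ≥ f_r(x)` for all `x ∈ [0, Z]`. -/
theorem stmt2 (d : ℕ) (hd : 1 ≤ d) (s : Fin d → ℝ) (hs : ∀ i, 0 < s i)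
    (p r : Fin d → ℝ) (hp : ProbVec d p) (hr : ProbVec d r) :
    (∃ T ∈ TP d s, T.mulVec p = r) ↔
      ∀ x ∈ Set.Icc (0 : ℝ) (∑ i, s i), curve d s r x ≤ curve d s p x := by
  have hZ : ∑ i, s i ≠ 0 := (sum_pos (fun i _ => hs i) ⟨⟨0, hd⟩, mem_univ _⟩).ne'
  constructor
  · rintro ⟨T, hT, rfl⟩ x hx
    exact curve_mulVec_le hs hT.1 hT.2.1 (mulVec_eq_of_mem_TP hZ hT) p hx
  · intro hcurve
    have hclosed : IsClosed ((· *ᵥ p) '' TP d s) :=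
      (isCompact_TP.image (continuous_id.matrix_mulVec continuous_const)).isClosed
    have hconv : Convex ℝ ((· *ᵥ p) '' TP d s) :=
      convex_TP.is_linear_image ⟨fun T U => add_mulVec T U p, fun c T => smul_mulVec c T p⟩
    refine mem_of_forall_exists_dotProduct_le hconv hclosed fun a => ?_
    obtain ⟨T, hT, hle⟩ := exists_mem_TP_dotProduct_le hs (hr.2.trans hp.2.symm) hcurve a
    exact ⟨_, ⟨T, hT, rfl⟩, hle⟩
end

section
/- A matrix M ∈ T(r,c) is an extreme point of T(r,c) if and only if its support graph is acyclic (a forest). Moreover, if all entries of r and of c are strictly positive, then the support graph of every extreme point of T(r,c) has no isolated vertices. -/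
/-- The transportation polytope `T(r,c)`. -/
def TransportPolytope (m n : ℕ) (r : Fin m → ℝ) (c : Fin n → ℝ) :
    Set (Matrix (Fin m) (Fin n) ℝ) :=
  {M | (∀ i j, 0 ≤ M i j) ∧ (∀ i, ∑ j, M i j = r i) ∧ (∀ j, ∑ i, M i j = c j)}

/-- The bipartite support graph of a matrix `M`: vertices are rows (`Sum.inl`) and
columns (`Sum.inr`), with an edge between row `i` and column `j` iff `M i j ≠ 0`. -/
def supportGraph (m n : ℕ) (M : Matrix (Fin m) (Fin n) ℝ) :
    SimpleGraph (Fin m ⊕ Fin n) :=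
  SimpleGraph.fromRel fun a b =>
    match a, b with
    | Sum.inl i, Sum.inr j => M i j ≠ 0
    | _, _ => False

/-!
Both properties of `M ∈ T(r,c)` are equivalent to the absence of a nonzero matrix `D` with zero
row and column sums whose support lies in that of `M`. For extremality this is the perturbation
`M ± εD`. A cycle in the support graph carries such a `D`, alternating `±1` along the cycle;
conversely, if the support graph of such a `D` is a forest, every edge is a bridge, and
testing the zero margins against the indicator of one side of a bridge shows that `D` vanishes on
it. Positive margins force a nonzero entry in every row and column.
-/

open Finset SimpleGraph

variable {m n : ℕ}

section SupportGraph

variable {M : Matrix (Fin m) (Fin n) ℝ}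

@[simp]
lemma supportGraph_adj_inl_inr {i : Fin m} {j : Fin n} :
    (supportGraph m n M).Adj (.inl i) (.inr j) ↔ M i j ≠ 0 := by
  simp [supportGraph]

@[simp]
lemma supportGraph_adj_inr_inl {i : Fin m} {j : Fin n} :
    (supportGraph m n M).Adj (.inr j) (.inl i) ↔ M i j ≠ 0 := by
  simp [supportGraph]

@[simp]
lemma not_supportGraph_adj_inl_inl {i i' : Fin m} :
    ¬ (supportGraph m n M).Adj (.inl i) (.inl i') := by
  simp [supportGraph]

@[simp]
lemma not_supportGraph_adj_inr_inr {j j' : Fin n} :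
    ¬ (supportGraph m n M).Adj (.inr j) (.inr j') := by
  simp [supportGraph]

lemma supportGraph_mono {D : Matrix (Fin m) (Fin n) ℝ} (h : ∀ i j, M i j = 0 → D i j = 0) :
    supportGraph m n D ≤ supportGraph m n M := by
  rintro (i | j) (i' | j') hadj <;> simp at hadj ⊢ <;> exact mt (h _ _) hadj

end SupportGraph

def HasZeroMargins (D : Matrix (Fin m) (Fin n) ℝ) : Prop :=
  (∀ i, ∑ j, D i j = 0) ∧ ∀ j, ∑ i, D i j = 0

section Potential

variable {D : Matrix (Fin m) (Fin n) ℝ}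

lemma HasZeroMargins.sum_mul_sub_eq_zero (hD : HasZeroMargins D) (φ : Fin m ⊕ Fin n → ℝ) :
    ∑ i, ∑ j, D i j * (φ (.inl i) - φ (.inr j)) = 0 := by
  simp only [mul_sub, sum_sub_distrib]
  rw [sum_comm (f := fun i j => D i j * φ (.inr j))]
  simp [← sum_mul, hD.1, hD.2]

lemma HasZeroMargins.eq_zero_of_isAcyclic (hD : HasZeroMargins D)
    (hac : (supportGraph m n D).IsAcyclic) : D = 0 := by
  ext i j
  by_contra hij
  set H := (supportGraph m n D).deleteEdges {s(.inl i, .inr j)}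
  have hbridge : ¬ H.Reachable (.inl i) (.inr j) :=
    isBridge_iff.1 (isAcyclic_iff_forall_adj_isBridge.1 hac (supportGraph_adj_inl_inr.2 hij))
  classical
  let φ : Fin m ⊕ Fin n → ℝ := fun v => if H.Reachable (.inl i) v then 1 else 0
  have hφ : ∀ i' j', (i', j') ≠ (i, j) → D i' j' * (φ (.inl i') - φ (.inr j')) = 0 := by
    intro i' j' hne
    by_cases hD0 : D i' j' = 0
    · simp [hD0]
    have hadj : H.Adj (.inl i') (.inr j') := by
      simp only [H, deleteEdges_adj, supportGraph_adj_inl_inr, Set.mem_singleton_iff]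
      refine ⟨hD0, ?_⟩
      simpa using hne
    have : H.Reachable (.inl i) (.inl i') ↔ H.Reachable (.inl i) (.inr j') :=
      ⟨fun h => h.trans hadj.reachable, fun h => h.trans hadj.reachable.symm⟩
    simp [φ, this]
  have hsum := hD.sum_mul_sub_eq_zero φ
  rw [← Fintype.sum_prod_type', Fintype.sum_eq_single (i, j) (fun p hp => hφ p.1 p.2 hp)] at hsum
  simp [φ, hbridge] at hsum
  exact hij hsum

end Potential

section WalkFlow

variable {M : Matrix (Fin m) (Fin n) ℝ}

def dartMatrix : Fin m ⊕ Fin n → Fin m ⊕ Fin n → Matrix (Fin m) (Fin n) ℝ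
  | .inl i, .inr j => Matrix.single i j 1
  | .inr j, .inl i => -Matrix.single i j 1
  | _, _ => 0

def walkFlow {G : SimpleGraph (Fin m ⊕ Fin n)} {a b : Fin m ⊕ Fin n} (p : G.Walk a b) :
    Matrix (Fin m) (Fin n) ℝ :=
  (p.darts.map fun d => dartMatrix d.fst d.snd).sum

@[simp]
lemma walkFlow_nil {G : SimpleGraph (Fin m ⊕ Fin n)} {a : Fin m ⊕ Fin n} :
    walkFlow (Walk.nil : G.Walk a a) = 0 := rfl

@[simp]
lemma walkFlow_cons {G : SimpleGraph (Fin m ⊕ Fin n)} {a b c : Fin m ⊕ Fin n} (h : G.Adj a b)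
    (p : G.Walk b c) : walkFlow (Walk.cons h p) = dartMatrix a b + walkFlow p := by
  simp [walkFlow]

lemma dartMatrix_apply_eq_zero {x y : Fin m ⊕ Fin n} {i : Fin m} {j : Fin n}
    (h : s(x, y) ≠ s(.inl i, .inr j)) : dartMatrix x y i j = 0 := by
  rcases x with i' | j' <;> rcases y with i'' | j'' <;>
    simp_all [dartMatrix, Sym2.eq_swap]

lemma sum_dartMatrix_row {x y : Fin m ⊕ Fin n} (h : (supportGraph m n M).Adj x y) (i : Fin m) :
    ∑ j, dartMatrix x y i j = (if x = .inl i then 1 else 0) - (if y = .inl i then 1 else 0) := by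
  rcases x with i' | j' <;> rcases y with i'' | j'' <;>
    simp_all [dartMatrix, Matrix.single_apply, ite_and]

lemma sum_dartMatrix_col {x y : Fin m ⊕ Fin n} (h : (supportGraph m n M).Adj x y) (j : Fin n) :
    ∑ i, dartMatrix x y i j = (if y = .inr j then 1 else 0) - (if x = .inr j then 1 else 0) := by
  rcases x with i' | j' <;> rcases y with i'' | j'' <;>
    simp_all [dartMatrix, Matrix.single_apply, ite_and]

lemma sum_walkFlow_row {a b : Fin m ⊕ Fin n} (p : (supportGraph m n M).Walk a b) (i : Fin m) :
    ∑ j, walkFlow p i j = (if a = .inl i then 1 else 0) - (if b = .inl i then 1 else 0) := by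
  induction p with
  | nil => simp
  | cons h p ih =>
    simp only [walkFlow_cons, Matrix.add_apply, sum_add_distrib, ih, sum_dartMatrix_row h]
    ring

lemma sum_walkFlow_col {a b : Fin m ⊕ Fin n} (p : (supportGraph m n M).Walk a b) (j : Fin n) :
    ∑ i, walkFlow p i j = (if b = .inr j then 1 else 0) - (if a = .inr j then 1 else 0) := by
  induction p with
  | nil => simp
  | cons h p ih =>
    simp only [walkFlow_cons, Matrix.add_apply, sum_add_distrib, ih, sum_dartMatrix_col h]
    ring

lemma hasZeroMargins_walkFlow {a : Fin m ⊕ Fin n} (p : (supportGraph m n M).Walk a a) :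
    HasZeroMargins (walkFlow p) :=
  ⟨fun i => by simp [sum_walkFlow_row], fun j => by simp [sum_walkFlow_col]⟩

lemma walkFlow_apply_eq_zero {G : SimpleGraph (Fin m ⊕ Fin n)} {a b : Fin m ⊕ Fin n}
    (p : G.Walk a b) {i : Fin m} {j : Fin n} (h : s(.inl i, .inr j) ∉ p.edges) :
    walkFlow p i j = 0 := by
  induction p with
  | nil => rfl
  | cons hadj p ih =>
    simp only [Walk.edges_cons, List.mem_cons, not_or] at h
    simp [dartMatrix_apply_eq_zero (Ne.symm h.1), ih h.2]

lemma walkFlow_apply_eq_zero_of_eq_zero {a b : Fin m ⊕ Fin n} (p : (supportGraph m n M).Walk a b)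
    {i : Fin m} {j : Fin n} (h : M i j = 0) : walkFlow p i j = 0 :=
  walkFlow_apply_eq_zero p fun he => supportGraph_adj_inl_inr.1 (p.adj_of_mem_edges he) h

/-- The first edge of a cycle is traversed exactly once, so its entry is `±1`. -/
lemma SimpleGraph.Walk.IsCycle.walkFlow_ne_zero {a : Fin m ⊕ Fin n}
    {p : (supportGraph m n M).Walk a a} (hp : p.IsCycle) : walkFlow p ≠ 0 := by
  cases p with
  | nil => exact absurd hp Walk.not_isCycle_nil
  | @cons _ b _ hadj q =>
    have hq := ((Walk.cons_isCycle_iff q hadj).1 hp).2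
    intro h0
    rcases a with i | j <;> rcases b with i' | j'
    · simp at hadj
    · have := congrFun (congrFun h0 i) j'
      simp [walkFlow_apply_eq_zero q hq, dartMatrix] at this
    · rw [Sym2.eq_swap] at hq
      have := congrFun (congrFun h0 i') j
      simp [walkFlow_apply_eq_zero q hq, dartMatrix] at this
    · simp at hadj

end WalkFlow

lemma isAcyclic_supportGraph_iff {M : Matrix (Fin m) (Fin n) ℝ} :
    (supportGraph m n M).IsAcyclic ↔
      ∀ D, HasZeroMargins D → (∀ i j, M i j = 0 → D i j = 0) → D = 0 := by
  refine ⟨fun hac D hD hsupp => hD.eq_zero_of_isAcyclic (hac.anti (supportGraph_mono hsupp)),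
    fun h => ?_⟩
  rintro a p hp
  exact hp.walkFlow_ne_zero <|
    h _ (hasZeroMargins_walkFlow p) fun _ _ => walkFlow_apply_eq_zero_of_eq_zero p

open Filter Topology in
lemma exists_pos_mul_abs_le {ι : Type*} [Finite ι] {f g : ι → ℝ} (hf : ∀ k, 0 ≤ f k)
    (hfg : ∀ k, f k = 0 → g k = 0) : ∃ ε > 0, ∀ k, ε * |g k| ≤ f k := by
  have hev : ∀ᶠ ε in 𝓝[>] (0 : ℝ), ∀ k, ε * |g k| ≤ f k := by
    refine eventually_all.2 fun k => ?_
    rcases (hf k).eq_or_lt with h | h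
    · simp [hfg k h.symm, ← h]
    · have hlim : Tendsto (fun ε => ε * |g k|) (𝓝[>] 0) (𝓝 0) :=
        ((continuous_id.mul continuous_const).tendsto' 0 0 (by simp)).mono_left
          nhdsWithin_le_nhds
      exact (hlim.eventually (gt_mem_nhds h)).mono fun _ => le_of_lt
  obtain ⟨ε, hle, hε⟩ := (hev.and self_mem_nhdsWithin).exists
  exact ⟨ε, hε, hle⟩

section Polytope

variable {r : Fin m → ℝ} {c : Fin n → ℝ} {M : Matrix (Fin m) (Fin n) ℝ}

lemma hasZeroMargins_sub {X Y : Matrix (Fin m) (Fin n) ℝ} (hX : X ∈ TransportPolytope m n r c)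
    (hY : Y ∈ TransportPolytope m n r c) : HasZeroMargins (X - Y) :=
  ⟨fun i => by simp [sum_sub_distrib, hX.2.1 i, hY.2.1 i],
    fun j => by simp [sum_sub_distrib, hX.2.2 j, hY.2.2 j]⟩

lemma add_smul_mem_transportPolytope {D : Matrix (Fin m) (Fin n) ℝ} {t : ℝ}
    (hM : M ∈ TransportPolytope m n r c) (hD : HasZeroMargins D)
    (ht : ∀ i j, 0 ≤ M i j + t * D i j) : M + t • D ∈ TransportPolytope m n r c :=
  ⟨ht, fun i => by simp [sum_add_distrib, ← mul_sum, hD.1 i, hM.2.1 i],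
    fun j => by simp [sum_add_distrib, ← mul_sum, hD.2 j, hM.2.2 j]⟩

lemma mem_extremePoints_transportPolytope_iff (hM : M ∈ TransportPolytope m n r c) :
    M ∈ Set.extremePoints ℝ (TransportPolytope m n r c) ↔
      ∀ D, HasZeroMargins D → (∀ i j, M i j = 0 → D i j = 0) → D = 0 := by
  constructor
  · intro hext D hD hsupp
    obtain ⟨ε, hε, hle⟩ := exists_pos_mul_abs_le (f := fun p : Fin m × Fin n => M p.1 p.2)
      (g := fun p => D p.1 p.2) (fun _ => hM.1 _ _) (fun _ => hsupp _ _)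
    have hmem : ∀ t, |t| = ε → M + t • D ∈ TransportPolytope m n r c := fun t ht =>
      add_smul_mem_transportPolytope hM hD fun i j => by
        have := neg_abs_le (t * D i j)
        rw [abs_mul, ht] at this
        linarith [hle (i, j)]
    have hseg : M ∈ openSegment ℝ (M + ε • D) (M + (-ε) • D) :=
      ⟨1 / 2, 1 / 2, by norm_num, by norm_num, by norm_num, by module⟩
    have hεD : M + ε • D = M :=
      hext.2 (hmem ε (abs_of_pos hε)) (hmem (-ε) (by simp [abs_of_pos hε])) hseg
    exact (smul_eq_zero.1 (add_eq_left.1 hεD)).resolve_left hε.ne'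
  · intro h
    refine ⟨hM, fun X hX Y hY ⟨a, b, ha, hb, hab, hXY⟩ => ?_⟩
    obtain rfl : X = Y := sub_eq_zero.1 <| h _ (hasZeroMargins_sub hX hY) fun i j hMij => by
      have hsum : a * X i j + b * Y i j = 0 := by
        simpa [hMij] using congrFun (congrFun hXY i) j
      obtain ⟨hx, hy⟩ := (add_eq_zero_iff_of_nonneg (mul_nonneg ha.le (hX.1 i j))
        (mul_nonneg hb.le (hY.1 i j))).1 hsum
      simp [(mul_eq_zero.1 hx).resolve_left ha.ne', (mul_eq_zero.1 hy).resolve_left hb.ne']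
    rw [← hXY, ← add_smul, hab, one_smul]

lemma exists_supportGraph_adj (hM : M ∈ TransportPolytope m n r c) (hr : ∀ i, 0 < r i)
    (hc : ∀ j, 0 < c j) (v : Fin m ⊕ Fin n) : ∃ w, (supportGraph m n M).Adj v w := by
  rcases v with i | j
  · obtain ⟨j, -, hj⟩ := exists_ne_zero_of_sum_ne_zero ((hM.2.1 i).trans_ne (hr i).ne')
    exact ⟨.inr j, supportGraph_adj_inl_inr.2 hj⟩
  · obtain ⟨i, -, hi⟩ := exists_ne_zero_of_sum_ne_zero ((hM.2.2 j).trans_ne (hc j).ne')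
    exact ⟨.inl i, supportGraph_adj_inr_inl.2 hi⟩

end Polytope

theorem stmt5_general (m n : ℕ) (r : Fin m → ℝ) (c : Fin n → ℝ)
    (M : Matrix (Fin m) (Fin n) ℝ) (hM : M ∈ TransportPolytope m n r c) :
    (M ∈ Set.extremePoints ℝ (TransportPolytope m n r c) ↔
      (supportGraph m n M).IsAcyclic) ∧
    ((∀ i, 0 < r i) → (∀ j, 0 < c j) →
      M ∈ Set.extremePoints ℝ (TransportPolytope m n r c) →
      ∀ v, ∃ w, (supportGraph m n M).Adj v w) :=
  ⟨(mem_extremePoints_transportPolytope_iff hM).trans isAcyclic_supportGraph_iff.symm,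
    fun hr hc _ => exists_supportGraph_adj hM hr hc⟩

/-- `M ∈ T(r,c)` is an extreme point iff its support graph is acyclic
(a forest); moreover, if all entries of `r` and of `c` are strictly positive then the
support graph of every extreme point has no isolated vertices. -/
theorem stmt5 (m n : ℕ) (r : Fin m → ℝ) (c : Fin n → ℝ)
    (hr : ∀ i, 0 ≤ r i) (hc : ∀ j, 0 ≤ c j) (hsum : ∑ i, r i = ∑ j, c j)
    (M : Matrix (Fin m) (Fin n) ℝ) (hM : M ∈ TransportPolytope m n r c) :
    (M ∈ Set.extremePoints ℝ (TransportPolytope m n r c) ↔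
      (supportGraph m n M).IsAcyclic) ∧
    ((∀ i, 0 < r i) → (∀ j, 0 < c j) →
      M ∈ Set.extremePoints ℝ (TransportPolytope m n r c) →
      ∀ v, ∃ w, (supportGraph m n M).Adj v w) :=
  stmt5_general m n r c M hM
end

section
/- Every extreme point of TP(d,s) has at most 2d − 1 nonzero entries. -/
/-!
An extreme point `T` of a polytope `{T ≥ 0, L T = b}` of matrices has at most `rank L` nonzero
entries: otherwise some `Δ ≠ 0` supported on the support of `T` lies in `ker L`, and
`T ± ε Δ` stay in the polytope for small `ε`, exhibiting `T` as a midpoint. Thermal processes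
are cut out by the `2d` linear conditions "column sums are `1`" and "`T g = g`", and these have
rank at most `2d - 1`, because `∑ᵢ (T g)ᵢ = ∑ⱼ gⱼ ∑ᵢ Tᵢⱼ`.
-/

open Filter Topology Module LinearMap Matrix

namespace Matrix

variable {m n W : Type*} [Fintype m] [Fintype n] [AddCommGroup W] [Module ℝ W]

theorem eventually_nonneg_add_smul {T Δ : Matrix m n ℝ} (hT : ∀ i j, 0 ≤ T i j)
    (hΔ : ∀ i j, T i j = 0 → Δ i j = 0) :
    ∀ᶠ ε in 𝓝 (0 : ℝ), ∀ i j, 0 ≤ (T + ε • Δ) i j := by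
  simp only [eventually_all, add_apply, smul_apply, smul_eq_mul]
  intro i j
  rcases (hT i j).eq_or_lt with h | h
  · simp [← h, hΔ i j h.symm]
  · have : Tendsto (fun ε : ℝ => T i j + ε * Δ i j) (𝓝 0) (𝓝 (T i j)) := by
      simpa using ((continuous_mul_const (Δ i j)).tendsto' 0 0 (zero_mul _)).const_add (T i j)
    exact (this.eventually (lt_mem_nhds h)).mono fun _ => le_of_lt

theorem exists_ne_zero_map_eq_zero_of_finrank_range_lt (L : Matrix m n ℝ →ₗ[ℝ] W)
    {S : Set (m × n)} (hS : finrank ℝ (range L) < S.ncard) :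
    ∃ Δ ≠ 0, L Δ = 0 ∧ ∀ i j, (i, j) ∉ S → Δ i j = 0 := by
  classical
  let E := (LinearEquiv.curry ℝ ℝ m n).toLinearMap ∘ₗ
    Function.ExtendByZero.linearMap ℝ ((↑) : S → m × n)
  have hE : ∀ x a, E x a.1.1 a.1.2 = x a := fun x a =>
    Subtype.val_injective.extend_apply x 0 a
  obtain ⟨x, hx, hx0⟩ := (Submodule.ne_bot_iff _).1 <|
    ker_ne_bot_of_finrank_lt (f := L.rangeRestrict ∘ₗ E) <| by
      rwa [finrank_fintype_fun_eq_card, ← Nat.card_eq_fintype_card, Nat.card_coe_set_eq]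
  refine ⟨E x, fun h => hx0 (funext fun a => by rw [← hE x a, h]; rfl), ?_, fun i j hij => ?_⟩
  · exact congrArg Subtype.val (mem_ker.1 hx)
  · exact Function.extend_apply' _ _ _ fun ⟨a, ha⟩ => hij (ha ▸ a.2)

theorem ncard_support_le_finrank_range_of_mem_extremePoints (L : Matrix m n ℝ →ₗ[ℝ] W)
    (b : W) {T : Matrix m n ℝ}
    (hT : T ∈ Set.extremePoints ℝ {T | (∀ i j, 0 ≤ T i j) ∧ L T = b}) :
    {ij : m × n | T ij.1 ij.2 ≠ 0}.ncard ≤ finrank ℝ (range L) := by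
  by_contra! h
  obtain ⟨Δ, hΔ0, hLΔ, hΔT⟩ := exists_ne_zero_map_eq_zero_of_finrank_range_lt L h
  have hnonneg := eventually_nonneg_add_smul hT.1.1 fun i j h => hΔT i j (by simpa using h)
  have hnonneg' := (continuous_neg.tendsto' (0 : ℝ) 0 neg_zero).eventually hnonneg
  obtain ⟨ε, ⟨hpos, hneg⟩, hε : 0 < ε⟩ :=
    ((hnonneg.and hnonneg').filter_mono nhdsWithin_le_nhds |>.and self_mem_nhdsWithin).exists
      (f := 𝓝[>] (0 : ℝ))
  have hmem : ∀ c : ℝ, (∀ i j, 0 ≤ (T + c • Δ) i j) →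
      T + c • Δ ∈ {T | (∀ i j, 0 ≤ T i j) ∧ L T = b} := fun c hc =>
    ⟨hc, by simp [hLΔ, hT.1.2]⟩
  have hsegment : T ∈ openSegment ℝ (T + ε • Δ) (T + (-ε) • Δ) := by
    simpa [neg_smul, ← sub_eq_add_neg] using mem_openSegment_add_sub (𝕜 := ℝ) T (ε • Δ)
  have hεΔ : ε • Δ = 0 := add_eq_left.1 (hT.2 (hmem ε hpos) (hmem (-ε) hneg) hsegment)
  exact hΔ0 ((smul_eq_zero.1 hεΔ).resolve_left hε.ne')

end Matrix

def colSumsMulVec {n : Type*} [Fintype n] (g : n → ℝ) :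
    Matrix n n ℝ →ₗ[ℝ] (n → ℝ) × (n → ℝ) where
  toFun T := (1 ᵥ* T, T *ᵥ g)
  map_add' A B := by simp [vecMul_add, add_mulVec]
  map_smul' c A := by simp [vecMul_smul, smul_mulVec]

theorem finrank_range_colSumsMulVec_le {n : Type*} [Fintype n] (g : n → ℝ) :
    finrank ℝ (range (colSumsMulVec g)) ≤ 2 * Fintype.card n - 1 := by
  classical
  rcases isEmpty_or_nonempty n with _ | ⟨⟨i⟩⟩
  · simpa using (range (colSumsMulVec g)).finrank_le
  have hi : ((0, Pi.single i 1) : (n → ℝ) × (n → ℝ)) ∉ range (colSumsMulVec g) := by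
    rintro ⟨T, hT⟩
    simp only [colSumsMulVec, coe_mk, AddHom.coe_mk, Prod.mk.injEq] at hT
    have h := dotProduct_mulVec 1 T g
    rw [hT.1, hT.2] at h
    simp at h
  have hlt := Submodule.finrank_lt (s := range (colSumsMulVec g)) fun htop =>
    hi (htop ▸ Submodule.mem_top)
  rw [finrank_prod, finrank_fintype_fun_eq_card] at hlt
  omega

theorem TP_eq (d : ℕ) (s : Fin d → ℝ) :
    TP d s = {T | (∀ i j, 0 ≤ T i j) ∧
      colSumsMulVec (fun i => s i / ∑ k, s k) T = (1, fun i => s i / ∑ k, s k)} := by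
  ext T
  simp [TP, colSumsMulVec, funext_iff, vecMul, dotProduct]

theorem stmt7_general (d : ℕ) (s : Fin d → ℝ)
    (T : Matrix (Fin d) (Fin d) ℝ) (hT : T ∈ Set.extremePoints ℝ (TP d s)) :
    {ij : Fin d × Fin d | T ij.1 ij.2 ≠ 0}.ncard ≤ 2 * d - 1 := by
  rw [TP_eq] at hT
  simpa using (Matrix.ncard_support_le_finrank_range_of_mem_extremePoints _ _ hT).trans
    (finrank_range_colSumsMulVec_le _)

/-- every extreme point of `TP(d,s)` has at most `2d - 1` nonzero
entries. -/
theorem stmt7 (d : ℕ) (hd : 1 ≤ d) (s : Fin d → ℝ) (hs : ∀ i, 0 < s i)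
    (T : Matrix (Fin d) (Fin d) ℝ) (hT : T ∈ Set.extremePoints ℝ (TP d s)) :
    {ij : Fin d × Fin d | T ij.1 ij.2 ≠ 0}.ncard ≤ 2 * d - 1 :=
  stmt7_general d s T hT
end

section
/- Let p be a probability vector. Every r ∈ p^TP can be written as a convex combination r = Σ_{i=1}^{N} c_i σ_i with N ≤ 2^{d−1}, c_i ≥ 0, Σ_i c_i = 1, where each σ_i is a probability vector tightly thermomajorized by p. -/
/-- `p^TP`, the set of states achievable from `p` by thermal processes. -/
def achievable (d : ℕ) (s p : Fin d → ℝ) : Set (Fin d → ℝ) :=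
  (fun T : Matrix (Fin d) (Fin d) ℝ => T.mulVec p) '' TP d s

/-- `π` is a β-order of `p`. -/
def IsBetaOrder (d : ℕ) (s p : Fin d → ℝ) (π : Equiv.Perm (Fin d)) : Prop :=
  ∀ i j : Fin d, i ≤ j → p (π j) / s (π j) ≤ p (π i) / s (π i)

/-- `p` tightly thermomajorizes `r`. -/
def TightlyThermomajorizes (d : ℕ) (s p r : Fin d → ℝ) : Prop :=
  (∀ x ∈ Set.Icc (0 : ℝ) (∑ i, s i), curve d s r x ≤ curve d s p x) ∧
  ∃ π : Equiv.Perm (Fin d), IsBetaOrder d s r π ∧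
    ∀ k : Fin d, (k : ℕ) + 1 < d →
      curve d s p (∑ i ∈ Finset.Iic k, s (π i)) = ∑ i ∈ Finset.Iic k, r (π i)

/-!
Every achievable state `r` satisfies `∑_{i ∈ A} r i ≤ f_p (∑_{i ∈ A} s i)` for all index sets `A`.
For each order `π` let `σ^π` be the state whose partial sums along `π` are the values of `f_p` at
the partial sums of `s` along `π`. Concavity of `f_p` makes `π` a β-order of `σ^π`, so the curve
of `σ^π` is the polygon through those values, which lies below `f_p`: `σ^π` is tightly
thermomajorized by `p`. If a linear functional `c` separated `r` from the convex hull of the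
`σ^π`, take `π` sorting `c` decreasingly; summation by parts against the prefix constraints gives
`c ⬝ r ≤ c ⬝ σ^π` (Edmonds' greedy argument), a contradiction. Finally Carathéodory's theorem in
the hyperplane `∑ i, q i = 1` writes `r` as a convex combination of at most `d ≤ 2 ^ (d - 1)` of
the `σ^π`.
-/

open Finset

section Curve

variable {d : ℕ} {s p : Fin d → ℝ}

lemma exists_weights_sum_eq (hs : ∀ i, 0 ≤ s i) {x : ℝ} (hx : x ∈ Set.Icc 0 (∑ i, s i)) :
    ∃ lam : Fin d → ℝ, (∀ i, lam i ∈ Set.Icc (0 : ℝ) 1) ∧ ∑ i, lam i * s i = x := by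
  have hZ : 0 ≤ ∑ i, s i := sum_nonneg fun i _ => hs i
  refine ⟨fun _ => x / ∑ i, s i, fun _ => ⟨div_nonneg hx.1 hZ, div_le_one_of_le₀ hx.2 hZ⟩, ?_⟩
  rw [← mul_sum]
  exact div_mul_cancel_of_imp fun h => le_antisymm (h ▸ hx.2) hx.1

lemma le_curve (hp : ∀ i, 0 ≤ p i) {lam : Fin d → ℝ} (hlam : ∀ i, lam i ∈ Set.Icc (0 : ℝ) 1)
    {x : ℝ} (hx : ∑ i, lam i * s i = x) : ∑ i, lam i * p i ≤ curve d s p x := by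
  refine le_csSup ⟨∑ i, p i, ?_⟩ ⟨lam, hlam, hx, rfl⟩
  rintro _ ⟨μ, hμ, -, rfl⟩
  exact sum_le_sum fun i _ => mul_le_of_le_one_left (hp i) (hμ i).2

lemma curve_le (hs : ∀ i, 0 ≤ s i) {x b : ℝ} (hx : x ∈ Set.Icc 0 (∑ i, s i))
    (h : ∀ lam : Fin d → ℝ, (∀ i, lam i ∈ Set.Icc (0 : ℝ) 1) → ∑ i, lam i * s i = x →
      ∑ i, lam i * p i ≤ b) :
    curve d s p x ≤ b := by
  obtain ⟨lam, hlam, hlx⟩ := exists_weights_sum_eq hs hx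
  refine csSup_le ⟨_, lam, hlam, hlx, rfl⟩ ?_
  rintro _ ⟨μ, hμ, hμx, rfl⟩
  exact h μ hμ hμx

lemma curve_le_sum (hs : ∀ i, 0 ≤ s i) (hp : ∀ i, 0 ≤ p i) {x : ℝ}
    (hx : x ∈ Set.Icc 0 (∑ i, s i)) : curve d s p x ≤ ∑ i, p i :=
  curve_le hs hx fun _ hlam _ => sum_le_sum fun i _ => mul_le_of_le_one_left (hp i) (hlam i).2

lemma curve_sum (hs : ∀ i, 0 ≤ s i) (hp : ∀ i, 0 ≤ p i) :
    curve d s p (∑ i, s i) = ∑ i, p i := by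
  refine le_antisymm (curve_le_sum hs hp ⟨sum_nonneg fun i _ => hs i, le_rfl⟩) ?_
  simpa using le_curve (s := s) hp (lam := fun _ => 1) (fun _ => ⟨zero_le_one, le_rfl⟩) rfl

lemma curve_zero (hs : ∀ i, 0 < s i) (hp : ∀ i, 0 ≤ p i) : curve d s p 0 = 0 := by
  refine le_antisymm (curve_le (fun i => (hs i).le) ⟨le_rfl, sum_nonneg fun i _ => (hs i).le⟩
    fun lam hlam h0 => ?_) ?_
  · have hlam0 : ∀ i, lam i = 0 := fun i =>
      (mul_eq_zero_iff_right (hs i).ne').1 <| (sum_eq_zero_iff_of_nonneg fun j _ =>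
        mul_nonneg (hlam j).1 (hs j).le).1 h0 i (mem_univ i)
    simp [hlam0]
  · simpa using le_curve (s := s) hp (lam := 0) (fun _ => ⟨le_rfl, zero_le_one⟩) (by simp)

lemma concaveOn_curve (hs : ∀ i, 0 ≤ s i) (hp : ∀ i, 0 ≤ p i) :
    ConcaveOn ℝ (Set.Icc 0 (∑ i, s i)) (curve d s p) := by
  refine ⟨convex_Icc _ _, fun x hx y hy a b ha hb hab => ?_⟩
  simp only [smul_eq_mul]
  refine le_of_forall_pos_le_add fun ε hε => ?_
  obtain ⟨lx, hlx, hlxs⟩ := exists_weights_sum_eq hs hx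
  obtain ⟨ly, hly, hlys⟩ := exists_weights_sum_eq hs hy
  obtain ⟨_, ⟨μ, hμ, hμs, rfl⟩, hμp⟩ :=
    exists_lt_of_lt_csSup (by exact ⟨_, lx, hlx, hlxs, rfl⟩) (sub_lt_self (curve d s p x) hε)
  obtain ⟨_, ⟨ν, hν, hνs, rfl⟩, hνp⟩ :=
    exists_lt_of_lt_csSup (by exact ⟨_, ly, hly, hlys, rfl⟩) (sub_lt_self (curve d s p y) hε)
  have hmix : ∀ i, a * μ i + b * ν i ∈ Set.Icc (0 : ℝ) 1 := fun i =>
    ⟨by nlinarith [(hμ i).1, (hν i).1], by nlinarith [(hμ i).2, (hν i).2]⟩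
  have hcomb := le_curve (s := s) hp hmix (x := a * x + b * y) (by
    simp only [add_mul, mul_assoc, sum_add_distrib, ← mul_sum, hμs, hνs])
  simp only [add_mul, mul_assoc, sum_add_distrib, ← mul_sum] at hcomb
  nlinarith

end Curve

lemma ConcaveOn.slope_anti_of_le {s : Set ℝ} {f : ℝ → ℝ} (hf : ConcaveOn ℝ s f)
    {a b c e : ℝ} (ha : a ∈ s) (hb : b ∈ s) (hc : c ∈ s) (he : e ∈ s)
    (hab : a < b) (hbc : b ≤ c) (hce : c < e) :
    (f e - f c) / (e - c) ≤ (f b - f a) / (b - a) := by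
  rcases hbc.eq_or_lt with rfl | hbc
  · exact hf.slope_anti_adjacent ha he hab hce
  · exact (hf.slope_anti_adjacent hb he hbc hce).trans (hf.slope_anti_adjacent ha hc hab hbc)

lemma ConcaveOn.chord_le {s : Set ℝ} {f : ℝ → ℝ} (hf : ConcaveOn ℝ s f) {a x b : ℝ}
    (ha : a ∈ s) (hb : b ∈ s) (hax : a ≤ x) (hxb : x ≤ b) :
    (b - x) * f a + (x - a) * f b ≤ (b - a) * f x := by
  rcases hax.eq_or_lt with rfl | hax
  · linarith
  rcases hxb.eq_or_lt with rfl | hxb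
  · linarith
  have := hf.neg.secant_mono_aux1 ha hb hax hxb
  simp only [Pi.neg_apply] at this
  linarith

lemma exists_le_le_succ {α : Type*} [LinearOrder α] {u : ℕ → α} {n : ℕ} {x : α}
    (hn : 0 < n) (h0 : u 0 ≤ x) (hx : x ≤ u n) : ∃ k < n, u k ≤ x ∧ x ≤ u (k + 1) := by
  classical
  have hex : ∃ k, x ≤ u (k + 1) := ⟨n - 1, by rwa [Nat.sub_one_add_one_eq_of_pos hn]⟩
  refine ⟨Nat.find hex, ?_, ?_, Nat.find_spec hex⟩
  · exact (Nat.find_min' hex (m := n - 1) (by rwa [Nat.sub_one_add_one_eq_of_pos hn])).trans_lt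
      (Nat.sub_lt hn one_pos)
  · rcases h : Nat.find hex with _ | k
    · exact h0
    · exact (not_le.1 (Nat.find_min hex (h ▸ k.lt_succ_self))).le

lemma sum_mul_le_of_threshold {ι : Type*} [Fintype ι] {s q lam : ι → ℝ} {A : Finset ι} {t : ℝ}
    (hA : ∀ i ∈ A, t * s i ≤ q i) (hAc : ∀ i ∉ A, q i ≤ t * s i)
    (hlam : ∀ i, lam i ∈ Set.Icc (0 : ℝ) 1) :
    ∑ i, lam i * q i ≤ ∑ i ∈ A, q i + t * (∑ i, lam i * s i - ∑ i ∈ A, s i) := by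
  classical
  have key : ∑ i, lam i * (q i - t * s i) ≤ ∑ i ∈ A, (q i - t * s i) := by
    rw [← univ_inter A, ← sum_ite_mem]
    refine sum_le_sum fun i _ => ?_
    split_ifs with hi
    · exact mul_le_of_le_one_left (sub_nonneg.2 (hA i hi)) (hlam i).2
    · exact mul_nonpos_of_nonneg_of_nonpos (hlam i).1 (sub_nonpos.2 (hAc i hi))
  simp only [mul_sub, sum_sub_distrib, ← mul_sum, mul_left_comm (lam _) t] at key
  linarith

lemma AffineIndependent.linearIndependent_of_apply_eq_one {ι k V : Type*} [Ring k]
    [AddCommGroup V] [Module k V] {v : ι → V} (hv : AffineIndependent k v) (φ : V →ₗ[k] k)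
    (hφ : ∀ i, φ (v i) = 1) : LinearIndependent k v := by
  refine linearIndependent_iff'.2 fun t g hg => hv.eq_zero_of_sum_eq_zero ?_ hg
  simpa [hφ] using congrArg φ hg

section PrefixSet

variable {d : ℕ} (π : Equiv.Perm (Fin d))

def prefixSet (k : ℕ) : Finset (Fin d) := univ.filter fun i => (π.symm i : ℕ) < k

@[simp]
lemma mem_prefixSet {k : ℕ} {i : Fin d} : i ∈ prefixSet π k ↔ (π.symm i : ℕ) < k := by
  simp [prefixSet]

lemma prefixSet_zero : prefixSet π 0 = ∅ := by ext; simp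

lemma prefixSet_of_le {k : ℕ} (hk : d ≤ k) : prefixSet π k = univ := by
  ext i; simpa using (π.symm i).isLt.trans_le hk

lemma prefixSet_mono : Monotone (prefixSet π) :=
  fun _ _ hkl _ hi => (mem_prefixSet π).2 (((mem_prefixSet π).1 hi).trans_le hkl)

lemma apply_notMem_prefixSet {k : ℕ} (hk : k < d) : π ⟨k, hk⟩ ∉ prefixSet π k := by simp

lemma prefixSet_succ {k : ℕ} (hk : k < d) :
    prefixSet π (k + 1) = insert (π ⟨k, hk⟩) (prefixSet π k) := by
  ext i
  simp only [mem_insert, mem_prefixSet, Nat.lt_succ_iff_lt_or_eq, ← Equiv.symm_apply_eq,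
    Fin.ext_iff, or_comm]

lemma sum_prefixSet_succ (q : Fin d → ℝ) {k : ℕ} (hk : k < d) :
    ∑ i ∈ prefixSet π (k + 1), q i = ∑ i ∈ prefixSet π k, q i + q (π ⟨k, hk⟩) := by
  rw [prefixSet_succ π hk, sum_insert (apply_notMem_prefixSet π hk), add_comm]

lemma sum_Iic_eq_sum_prefixSet (q : Fin d → ℝ) (k : Fin d) :
    ∑ i ∈ Iic k, q (π i) = ∑ i ∈ prefixSet π (k + 1), q i := by
  have : prefixSet π (k + 1) = (Iic k).map π.toEmbedding := by
    ext i
    rw [Finset.mem_map_equiv, mem_prefixSet, mem_Iic, Fin.le_def, Nat.lt_succ_iff]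
  rw [this, sum_map]
  rfl

end PrefixSet

section TightVec

variable {d : ℕ} {s p q : Fin d → ℝ} (π : Equiv.Perm (Fin d))

lemma sum_prefixSet_mem_Icc (hs : ∀ i, 0 ≤ s i) (k : ℕ) :
    ∑ i ∈ prefixSet π k, s i ∈ Set.Icc 0 (∑ i, s i) :=
  ⟨sum_nonneg fun i _ => hs i, sum_le_sum_of_subset_of_nonneg (subset_univ _) fun i _ _ => hs i⟩

lemma IsBetaOrder.sum_mul_le (hs : ∀ i, 0 < s i) {π : Equiv.Perm (Fin d)}
    (hq : IsBetaOrder d s q π) {k : ℕ} (hk : k < d) {lam : Fin d → ℝ}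
    (hlam : ∀ i, lam i ∈ Set.Icc (0 : ℝ) 1) :
    ∑ i, lam i * q i ≤ ∑ i ∈ prefixSet π k, q i +
      q (π ⟨k, hk⟩) / s (π ⟨k, hk⟩) * (∑ i, lam i * s i - ∑ i ∈ prefixSet π k, s i) := by
  refine sum_mul_le_of_threshold (fun i hi => ?_) (fun i hi => ?_) hlam
  · have := hq (π.symm i) ⟨k, hk⟩ (le_of_lt ((mem_prefixSet π).1 hi))
    rw [Equiv.apply_symm_apply] at this
    exact (le_div_iff₀ (hs i)).1 this
  · have := hq ⟨k, hk⟩ (π.symm i) (not_lt.1 (mt (mem_prefixSet π).2 hi))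
    rw [Equiv.apply_symm_apply] at this
    exact (div_le_iff₀ (hs i)).1 this

/-- The vertex `σ^π` of the thermomajorization polytope: the state with β-order `π` whose
elbows all lie on the curve of `p`. -/
noncomputable def tightVec (s p : Fin d → ℝ) (π : Equiv.Perm (Fin d)) : Fin d → ℝ := fun i =>
  curve d s p (∑ j ∈ prefixSet π (π.symm i + 1), s j) -
    curve d s p (∑ j ∈ prefixSet π (π.symm i), s j)

lemma tightVec_apply {k : ℕ} (hk : k < d) :
    tightVec s p π (π ⟨k, hk⟩) = curve d s p (∑ j ∈ prefixSet π (k + 1), s j) -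
      curve d s p (∑ j ∈ prefixSet π k, s j) := by
  simp [tightVec]

lemma sum_prefixSet_tightVec (hs : ∀ i, 0 < s i) (hp : ∀ i, 0 ≤ p i) (k : ℕ) :
    ∑ i ∈ prefixSet π k, tightVec s p π i = curve d s p (∑ i ∈ prefixSet π k, s i) := by
  induction k with
  | zero => simp [prefixSet_zero, curve_zero hs hp]
  | succ k ih =>
    rcases lt_or_ge k d with hk | hk
    · rw [sum_prefixSet_succ π _ hk, ih, tightVec_apply π hk]
      ring
    · rw [prefixSet_of_le π (hk.trans k.le_succ), ← prefixSet_of_le π hk, ih]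

lemma sum_tightVec (hs : ∀ i, 0 < s i) (hp : ∀ i, 0 ≤ p i) :
    ∑ i, tightVec s p π i = ∑ i, p i := by
  simpa [prefixSet_of_le π le_rfl, curve_sum (fun i => (hs i).le) hp]
    using sum_prefixSet_tightVec π hs hp d

lemma tightVec_div {k : ℕ} (hk : k < d) :
    tightVec s p π (π ⟨k, hk⟩) / s (π ⟨k, hk⟩) =
      (curve d s p (∑ j ∈ prefixSet π (k + 1), s j) - curve d s p (∑ j ∈ prefixSet π k, s j)) /
        (∑ j ∈ prefixSet π (k + 1), s j - ∑ j ∈ prefixSet π k, s j) := by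
  rw [tightVec_apply, sum_prefixSet_succ π s hk, add_sub_cancel_left]

lemma isBetaOrder_tightVec (hs : ∀ i, 0 < s i) (hp : ∀ i, 0 ≤ p i) :
    IsBetaOrder d s (tightVec s p π) π := by
  intro i j hij
  have hf := concaveOn_curve (fun i => (hs i).le) hp
  have hS := sum_prefixSet_mem_Icc π (fun i => (hs i).le)
  have hlt : ∀ k (hk : k < d), ∑ l ∈ prefixSet π k, s l < ∑ l ∈ prefixSet π (k + 1), s l :=
    fun k hk => by rw [sum_prefixSet_succ π s hk]; exact lt_add_of_pos_right _ (hs _)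
  rw [← Fin.eta i i.isLt, ← Fin.eta j j.isLt, tightVec_div, tightVec_div]
  rcases hij.eq_or_lt with rfl | hij
  · rfl
  refine hf.slope_anti_of_le (hS _) (hS _) (hS _) (hS _) (hlt _ i.isLt) ?_ (hlt _ j.isLt)
  exact sum_le_sum_of_subset_of_nonneg (prefixSet_mono π (Fin.lt_def.1 hij))
    fun l _ _ => (hs l).le

lemma tightVec_nonneg (hs : ∀ i, 0 < s i) (hp : ∀ i, 0 ≤ p i) (i : Fin d) :
    0 ≤ tightVec s p π i := by
  have hd : d - 1 < d := Nat.sub_lt i.pos one_pos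
  -- The ratios `σ^π / s` decrease along `π`, and the last one is `(∑ p - f_p (⋯)) / s ≥ 0`.
  have hlast : 0 ≤ tightVec s p π (π ⟨d - 1, hd⟩) := by
    rw [tightVec_apply, Nat.sub_one_add_one_eq_of_pos i.pos, prefixSet_of_le π le_rfl,
      curve_sum (fun i => (hs i).le) hp, sub_nonneg]
    exact curve_le_sum (fun i => (hs i).le) hp (sum_prefixSet_mem_Icc π (fun i => (hs i).le) _)
  have hslope := isBetaOrder_tightVec π hs hp (π.symm i) ⟨d - 1, hd⟩
    (Fin.le_def.2 (Nat.le_sub_one_of_lt (π.symm i).isLt))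
  rw [Equiv.apply_symm_apply] at hslope
  simpa using (le_div_iff₀ (hs i)).1 ((div_nonneg hlast (hs _).le).trans hslope)

lemma curve_tightVec_le (hd : 0 < d) (hs : ∀ i, 0 < s i) (hp : ∀ i, 0 ≤ p i) {x : ℝ}
    (hx : x ∈ Set.Icc 0 (∑ i, s i)) : curve d s (tightVec s p π) x ≤ curve d s p x := by
  have hS := sum_prefixSet_mem_Icc π (fun i => (hs i).le)
  refine curve_le (fun i => (hs i).le) hx fun lam hlam hlx => ?_
  obtain ⟨k, hk, hSk, hSk1⟩ := exists_le_le_succ (u := fun k => ∑ i ∈ prefixSet π k, s i) hd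
    (by simpa [prefixSet_zero] using hx.1) (by simpa [prefixSet_of_le π le_rfl] using hx.2)
  have hexch := (isBetaOrder_tightVec π hs hp).sum_mul_le hs hk hlam
  rw [hlx, sum_prefixSet_tightVec π hs hp, tightVec_div] at hexch
  have hchord := (concaveOn_curve (fun i => (hs i).le) hp).chord_le (hS k) (hS (k + 1)) hSk hSk1
  have hD : 0 < ∑ i ∈ prefixSet π (k + 1), s i - ∑ i ∈ prefixSet π k, s i := by
    rw [sum_prefixSet_succ π s hk, add_sub_cancel_left]; exact hs _
  refine hexch.trans ?_
  rw [div_mul_eq_mul_div, ← le_sub_iff_add_le', div_le_iff₀ hD]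
  linarith

lemma tightlyThermomajorizes_tightVec (hd : 0 < d) (hs : ∀ i, 0 < s i) (hp : ∀ i, 0 ≤ p i) :
    TightlyThermomajorizes d s p (tightVec s p π) := by
  refine ⟨fun x hx => curve_tightVec_le π hd hs hp hx, π, isBetaOrder_tightVec π hs hp,
    fun k _ => ?_⟩
  rw [sum_Iic_eq_sum_prefixSet, sum_Iic_eq_sum_prefixSet, sum_prefixSet_tightVec π hs hp]

lemma probVec_tightVec (hs : ∀ i, 0 < s i) (hp : ProbVec d p) : ProbVec d (tightVec s p π) :=
  ⟨tightVec_nonneg π hs hp.1, (sum_tightVec π hs hp.1).trans hp.2⟩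

end TightVec

section Achievable

variable {d : ℕ} {s p r : Fin d → ℝ}

lemma sum_eq_of_mem_achievable (hr : r ∈ achievable d s p) : ∑ i, r i = ∑ i, p i := by
  obtain ⟨T, ⟨-, hcol, -⟩, rfl⟩ := hr
  simp only [Matrix.mulVec, dotProduct]
  rw [sum_comm]
  simp [← sum_mul, hcol]

lemma sum_le_curve_of_mem_achievable (hZ : ∑ i, s i ≠ 0) (hp : ∀ i, 0 ≤ p i)
    (hr : r ∈ achievable d s p) (A : Finset (Fin d)) :
    ∑ i ∈ A, r i ≤ curve d s p (∑ i ∈ A, s i) := by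
  obtain ⟨T, ⟨hT, hcol, hfix⟩, rfl⟩ := hr
  have hTs : ∀ i, ∑ j, T i j * s j = s i := fun i => by
    have := congrFun hfix i
    simp only [Matrix.mulVec, dotProduct, ← mul_div_assoc, ← sum_div] at this
    exact (div_left_inj' hZ).1 this
  have hμ : ∀ j, ∑ i ∈ A, T i j ∈ Set.Icc (0 : ℝ) 1 := fun j =>
    ⟨sum_nonneg fun i _ => hT i j, (sum_le_sum_of_subset_of_nonneg (subset_univ A)
      fun i _ _ => hT i j).trans (hcol j).le⟩
  calc ∑ i ∈ A, T.mulVec p i = ∑ j, (∑ i ∈ A, T i j) * p j := by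
        simp only [Matrix.mulVec, dotProduct, sum_mul]
        exact sum_comm
    _ ≤ curve d s p (∑ i ∈ A, s i) := le_curve hp hμ <| by
        simp only [sum_mul]
        rw [sum_comm]
        simp [hTs]

end Achievable

section Vertices

variable {d : ℕ} {s p r : Fin d → ℝ}

lemma sum_mul_nonneg_of_prefixSet (π : Equiv.Perm (Fin d)) {c z : Fin d → ℝ}
    (hc : Antitone (c ∘ π)) (hz : ∀ k, 0 ≤ ∑ i ∈ prefixSet π k, z i) (hz0 : ∑ i, z i = 0) :
    0 ≤ ∑ i, c i * z i := by
  -- Summation by parts along `π`: the weight `c (π j)` may be lowered to that of any later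
  -- index, because the prefix sums of `z` are nonnegative.
  have key : ∀ k, ∀ j : Fin d, k ≤ (j : ℕ) + 1 →
      c (π j) * ∑ i ∈ prefixSet π k, z i ≤ ∑ i ∈ prefixSet π k, c i * z i := by
    intro k
    induction k with
    | zero => simp [prefixSet_zero]
    | succ k ih =>
      intro j hkj
      have hk : k < d := by omega
      have hcj : c (π j) ≤ c (π ⟨k, hk⟩) := hc (Fin.le_def.2 (by simp; omega))
      have hzk := hz (k + 1)
      simp only [sum_prefixSet_succ π _ hk] at hzk ⊢
      nlinarith [ih ⟨k, hk⟩ (by simp), mul_le_mul_of_nonneg_right hcj hzk]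
  rcases Nat.eq_zero_or_pos d with rfl | hd
  · simp
  · simpa [prefixSet_of_le π le_rfl, hz0] using key d ⟨d - 1, by omega⟩ (by simp; omega)

lemma mem_convexHull_tightVec (hs : ∀ i, 0 < s i) (hp : ∀ i, 0 ≤ p i)
    (hrA : ∀ A : Finset (Fin d), ∑ i ∈ A, r i ≤ curve d s p (∑ i ∈ A, s i))
    (hr : ∑ i, r i = ∑ i, p i) : r ∈ convexHull ℝ (Set.range (tightVec s p)) := by
  by_contra hr'
  obtain ⟨f, u, hfu, huf⟩ := geometric_hahn_banach_closed_point (convex_convexHull ℝ _)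
    ((Set.finite_range _).isClosed_convexHull ℝ) hr'
  set c : Fin d → ℝ := fun i => f fun j => if i = j then 1 else 0
  have hf : ∀ q, f q = ∑ i, c i * q i := fun q => by
    simpa [mul_comm] using (f : (Fin d → ℝ) →ₗ[ℝ] ℝ).pi_apply_eq_sum_univ q
  -- `σ^π` for the order `π` that sorts `c` decreasingly maximizes `f` over the constraints.
  set π := Tuple.sort (-c)
  have hc : Antitone (c ∘ π) := fun i j hij => by simpa using Tuple.monotone_sort (-c) hij
  have hgreedy : 0 ≤ ∑ i, c i * (tightVec s p π i - r i) := by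
    refine sum_mul_nonneg_of_prefixSet π hc (fun k => ?_) ?_
    · rw [sum_sub_distrib, sum_prefixSet_tightVec π hs hp, sub_nonneg]
      exact hrA _
    · rw [sum_sub_distrib, sum_tightVec π hs hp, hr, sub_self]
  have hvert := hfu _ (subset_convexHull ℝ _ ⟨π, rfl⟩)
  rw [hf] at hvert huf
  simp only [mul_sub, sum_sub_distrib] at hgreedy
  linarith

end Vertices

/-- every `r ∈ p^TP` is a convex combination of at most `2^(d-1)`
probability vectors, each tightly thermomajorized by `p`. -/
theorem stmt9 (d : ℕ) (hd : 1 ≤ d) (s : Fin d → ℝ) (hs : ∀ i, 0 < s i)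
    (p : Fin d → ℝ) (hp : ProbVec d p) (r : Fin d → ℝ) (hr : r ∈ achievable d s p) :
    ∃ N : ℕ, 1 ≤ N ∧ N ≤ 2 ^ (d - 1) ∧
      ∃ (c : Fin N → ℝ) (σ : Fin N → (Fin d → ℝ)),
        (∀ i, 0 ≤ c i) ∧ (∑ i, c i = 1) ∧
        (∀ i, ProbVec d (σ i) ∧ TightlyThermomajorizes d s p (σ i)) ∧
        r = ∑ i, c i • σ i := by
  have hZ : ∑ i, s i ≠ 0 := (sum_pos (fun i _ => hs i) ⟨⟨0, hd⟩, mem_univ _⟩).ne'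
  obtain ⟨ι, _, z, w, hz, hai, hw0, hw1, hwz⟩ := eq_pos_convex_span_of_mem_convexHull <|
    mem_convexHull_tightVec hs hp.1 (sum_le_curve_of_mem_achievable hZ hp.1 hr)
      (sum_eq_of_mem_achievable hr)
  have hzσ : ∀ i, ProbVec d (z i) ∧ TightlyThermomajorizes d s p (z i) := fun i => by
    obtain ⟨π, hπ⟩ := hz ⟨i, rfl⟩
    exact hπ ▸ ⟨probVec_tightVec π hs hp, tightlyThermomajorizes_tightVec π hd hs hp.1⟩
  have hcard : Fintype.card ι ≤ d := by
    simpa using (hai.linearIndependent_of_apply_eq_one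
      (LinearMap.lsum ℝ (fun _ : Fin d => ℝ) ℝ fun _ => LinearMap.id)
      fun i => by simpa using (hzσ i).1.2).fintype_card_le_finrank
  have : Nonempty ι := by
    by_contra h
    simp [not_nonempty_iff.1 h] at hw1
  let e := Fintype.equivFin ι
  refine ⟨Fintype.card ι, Fintype.card_pos, hcard.trans ?_, w ∘ e.symm, z ∘ e.symm,
    fun _ => (hw0 _).le, (e.symm.sum_comp w).trans hw1, fun _ => hzσ _, ?_⟩
  · have := Nat.lt_two_pow_self (n := d - 1)
    omega
  · rw [← hwz]
    exact (e.symm.sum_comp fun j => w j • z j).symm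
end

section
/- Every probability vector p is an extreme point of its own achievable set p^TP. -/
/-!
Up to an additive constant, `chiSqForm g x = ∑ i, x i ^ 2 / g i` is the χ²-divergence of `x` from
the Gibbs state `g`. Thermal processes fix `g` and are column-stochastic, so by Cauchy–Schwarz they
can only decrease it: `p` maximises this form on `p^TP`. Being a positive definite quadratic form it
is strictly convex, and a maximiser of a strictly convex function on a set is an extreme point of it.
-/

open Finset Matrix

theorem mem_extremePoints_of_isMaxOn_of_strictConvexOn {𝕜 E β : Type*} [Field 𝕜] [LinearOrder 𝕜]
    [IsStrictOrderedRing 𝕜] [AddCommGroup E] [Module 𝕜 E] [AddCommMonoid β] [LinearOrder β]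
    [IsOrderedAddMonoid β] [Module 𝕜 β] [PosSMulStrictMono 𝕜 β] {s A : Set E} {f : E → β} {x : E}
    (hf : StrictConvexOn 𝕜 s f) (hAs : A ⊆ s) (hx : x ∈ A)
    (hmax : IsMaxOn f A x) : x ∈ A.extremePoints 𝕜 := by
  refine ⟨hx, fun x₁ hx₁ x₂ hx₂ hseg => ?_⟩
  obtain rfl : x₁ = x₂ := by
    by_contra hne
    exact (hf.lt_on_openSegment (hAs hx₁) (hAs hx₂) hne hseg).not_ge
      (max_le (isMaxOn_iff.mp hmax _ hx₁) (isMaxOn_iff.mp hmax _ hx₂))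
  rw [openSegment_same] at hseg
  exact hseg.symm

section ChiSq

variable {ι κ : Type*} [Fintype ι] [Fintype κ]

noncomputable def chiSqForm (g x : ι → ℝ) : ℝ := ∑ i, x i ^ 2 / g i

theorem chiSqForm_convex_combination_sub {g : ι → ℝ} (hg : ∀ i, g i ≠ 0) (x y : ι → ℝ)
    {a b : ℝ} (hab : a + b = 1) :
    a * chiSqForm g x + b * chiSqForm g y - chiSqForm g (a • x + b • y) =
      a * b * chiSqForm g (x - y) := by
  obtain rfl : b = 1 - a := by linarith
  simp only [chiSqForm, mul_sum, ← sum_add_distrib, ← sum_sub_distrib]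
  refine sum_congr rfl fun i _ => ?_
  simp only [Pi.add_apply, Pi.smul_apply, Pi.sub_apply, smul_eq_mul]
  field_simp [hg i]
  ring

theorem chiSqForm_pos {g : ι → ℝ} (hg : ∀ i, 0 < g i) {x : ι → ℝ} (hx : x ≠ 0) :
    0 < chiSqForm g x := by
  obtain ⟨i, hi⟩ := Function.ne_iff.mp hx
  exact sum_pos' (fun j _ => div_nonneg (sq_nonneg _) (hg j).le)
    ⟨i, mem_univ i, div_pos (sq_pos_of_ne_zero hi) (hg i)⟩

theorem strictConvexOn_chiSqForm {g : ι → ℝ} (hg : ∀ i, 0 < g i) :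
    StrictConvexOn ℝ Set.univ (chiSqForm g) := by
  refine ⟨convex_univ, fun x _ y _ hxy a b ha hb hab => ?_⟩
  have hpos := mul_pos (mul_pos ha hb) (chiSqForm_pos hg (sub_ne_zero.mpr hxy))
  rw [← chiSqForm_convex_combination_sub (fun i => (hg i).ne') x y hab] at hpos
  simp only [smul_eq_mul]
  linarith

theorem chiSqForm_mulVec_le {g : ι → ℝ} {h : κ → ℝ} (hh : ∀ j, 0 < h j) {T : Matrix ι κ ℝ}
    (hT : ∀ i j, 0 ≤ T i j) (hcol : ∀ j, ∑ i, T i j = 1) (hTh : T *ᵥ h = g) (x : κ → ℝ) :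
    chiSqForm g (T *ᵥ x) ≤ chiSqForm h x := by
  have hrow : ∀ i, (T *ᵥ x) i ^ 2 ≤ (∑ j, T i j * x j ^ 2 / h j) * g i := by
    intro i
    rw [← hTh, mul_comm]
    refine sum_sq_le_sum_mul_sum_of_sq_le_mul _ (fun j _ => mul_nonneg (hT i j) (hh j).le)
      (fun j _ => div_nonneg (mul_nonneg (hT i j) (sq_nonneg _)) (hh j).le)
      fun j _ => le_of_eq (by field_simp [(hh j).ne'])
  have hg : ∀ i, 0 ≤ g i := fun i => hTh ▸ sum_nonneg fun j _ => mul_nonneg (hT i j) (hh j).le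
  calc chiSqForm g (T *ᵥ x)
      ≤ ∑ i, ∑ j, T i j * x j ^ 2 / h j :=
        sum_le_sum fun i _ => div_le_of_le_mul₀ (hg i) (sum_nonneg fun j _ =>
          div_nonneg (mul_nonneg (hT i j) (sq_nonneg _)) (hh j).le) (hrow i)
    _ = chiSqForm h x := by
        rw [sum_comm]
        refine sum_congr rfl fun j _ => ?_
        simp only [mul_div_assoc, ← sum_mul, hcol j, one_mul]

end ChiSq

theorem one_mem_TP (d : ℕ) (s : Fin d → ℝ) : (1 : Matrix (Fin d) (Fin d) ℝ) ∈ TP d s :=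
  ⟨fun i j => by by_cases h : i = j <;> simp [one_apply, h],
    fun j => by simp [one_apply], one_mulVec _⟩

theorem mem_achievable_self (d : ℕ) (s p : Fin d → ℝ) : p ∈ achievable d s p :=
  ⟨1, one_mem_TP d s, one_mulVec p⟩

theorem stmt10_general (d : ℕ) (s : Fin d → ℝ) (hs : ∀ i, 0 < s i)
    (p : Fin d → ℝ) :
    p ∈ Set.extremePoints ℝ (achievable d s p) := by
  set g : Fin d → ℝ := fun i => s i / ∑ k, s k
  have hg : ∀ i, 0 < g i := fun i =>
    div_pos (hs i) ((hs i).trans_le (single_le_sum (fun k _ => (hs k).le) (mem_univ i)))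
  refine mem_extremePoints_of_isMaxOn_of_strictConvexOn (strictConvexOn_chiSqForm hg)
    (Set.subset_univ _) (mem_achievable_self d s p) ?_
  rintro _ ⟨T, ⟨hT, hcol, hTg⟩, rfl⟩
  exact chiSqForm_mulVec_le hg hT hcol hTg p

/-- every probability vector `p` is an extreme point (a vertex) of its
own achievable set `p^TP`. -/
theorem stmt10 (d : ℕ) (hd : 1 ≤ d) (s : Fin d → ℝ) (hs : ∀ i, 0 < s i)
    (p : Fin d → ℝ) (hp : ProbVec d p) :
    p ∈ Set.extremePoints ℝ (achievable d s p) :=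
  stmt10_general d s hs p
end

section
/- Let p and r be probability vectors such that p tightly thermomajorizes r. Then there exists a thermal process T ∈ TP(d,s) with T p = r such that T is an extreme point of TP(d,s) and T is a biplanar extremal thermal process with orders (π_in, π_out), where π_in is a β-order of p and π_out is a β-order of r. If moreover all slopes of f_p are different, then T is the unique thermal process satisfying T p = r. -/
/-- `M` (an `m × n` matrix) is biplanar with orders `(π_in, π_out)`: no two distinct
nonzero entries of `M` cross with respect to `(π_in, π_out)`. -/
def BiplanarWithOrders (m n : ℕ) (M : Matrix (Fin m) (Fin n) ℝ)
    (πin : Equiv.Perm (Fin n)) (πout : Equiv.Perm (Fin m)) : Prop :=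
  ∀ i i' : Fin m, ∀ j j' : Fin n, (i, j) ≠ (i', j') → M i j ≠ 0 → M i' j' ≠ 0 →
    ¬ ((((πout.symm i : Fin m) : ℤ) - ((πout.symm i' : Fin m) : ℤ)) *
        (((πin.symm j : Fin n) : ℤ) - ((πin.symm j' : Fin n) : ℤ)) < 0)

/-- `T` is a biplanar extremal thermal process with orders `(π_in, π_out)`. -/
def IsBiplanarExtremalTP (d : ℕ) (s : Fin d → ℝ) (T : Matrix (Fin d) (Fin d) ℝ)
    (πin πout : Equiv.Perm (Fin d)) : Prop :=
  T ∈ Set.extremePoints ℝ (TP d s) ∧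
  T * Matrix.diagonal s ∈ Set.extremePoints ℝ (TransportPolytope d d s s) ∧
  BiplanarWithOrders d d (T * Matrix.diagonal s) πin πout

/-!
Listing the weights `s` along a β-order `σin` of `p` cuts `[0, ∑ s]` into consecutive intervals,
and the thermomajorization curve of `p` at `x` is the greedy value of a fractional knapsack:
fill `[0, x]` with the intervals of largest slope `p i / s i` first. Summation by parts shows
that nothing beats it, and that with strictly decreasing slopes nothing else attains it.

Cutting `[0, ∑ s]` a second time, along a β-order `σout` of `r`, the matrix of overlaps of the
two families of intervals (the North-West corner coupling) is a non-crossing coupling of `s` with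
itself. Divided columnwise by `s` it maps `p` to `r`: row `σout a` collects the increment of the
curve over the `a`-th `σout`-interval, which the elbow condition fixes to be `r (σout a)`.
A coupling supported inside this staircase is determined by its margins, so the staircase is
extreme. When the slopes are distinct, the partial row sums of any thermal process `T` with
`T p = r` are maximisers of the curve at the elbows, hence greedy, and they pin `T` down.
-/

open Finset

theorem Set.mem_extremePoints_of_injective {𝕜 E F : Type*} [Ring 𝕜] [PartialOrder 𝕜]
    [IsOrderedRing 𝕜] [AddCommGroup E] [Module 𝕜 E] [AddCommGroup F] [Module 𝕜 F]
    {f : E →ₗ[𝕜] F} (hf : Function.Injective f) {A : Set E} {B : Set F} (hAB : Set.MapsTo f A B)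
    {x : E} (hx : x ∈ A) (hfx : f x ∈ B.extremePoints 𝕜) : x ∈ A.extremePoints 𝕜 := by
  refine ⟨hx, fun y hy z hz hxyz => hf (hfx.2 (hAB hy) (hAB hz) ?_)⟩
  simpa using (image_openSegment 𝕜 f.toAffineMap y z).subset (Set.mem_image_of_mem _ hxyz)

namespace Thermomajorization

section Knapsack

variable (w : ℕ → ℝ)

def cumsum (n : ℕ) : ℝ := ∑ k ∈ range n, w k

/-- The part of the block `[cumsum w n, cumsum w (n + 1)]` lying below `x`: what the greedy
solution of the fractional knapsack problem with capacity `x` takes from block `n`. -/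
def greedyFill (x : ℝ) (n : ℕ) : ℝ := min x (cumsum w (n + 1)) - min x (cumsum w n)

/-- How far the partial sums of `u` lag behind those of the greedy fill. -/
def slack (u : ℕ → ℝ) (x : ℝ) (n : ℕ) : ℝ := min x (cumsum w n) - ∑ k ∈ range n, u k

variable {w}

@[simp] lemma cumsum_zero : cumsum w 0 = 0 := sum_range_zero w

lemma cumsum_succ (n : ℕ) : cumsum w (n + 1) = cumsum w n + w n := sum_range_succ w n

lemma cumsum_mono (hw : ∀ n, 0 ≤ w n) : Monotone (cumsum w) :=
  monotone_nat_of_le_succ fun n => by simp only [cumsum_succ, le_add_iff_nonneg_right, hw]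

lemma cumsum_nonneg (hw : ∀ n, 0 ≤ w n) (n : ℕ) : 0 ≤ cumsum w n :=
  cumsum_zero (w := w) ▸ cumsum_mono hw n.zero_le

lemma sum_greedyFill {x : ℝ} (hx : 0 ≤ x) (n : ℕ) :
    ∑ k ∈ range n, greedyFill w x k = min x (cumsum w n) := by
  simp [greedyFill, sum_range_sub (fun k => min x (cumsum w k)), hx]

lemma greedyFill_nonneg (hw : ∀ n, 0 ≤ w n) (x : ℝ) (n : ℕ) : 0 ≤ greedyFill w x n :=
  sub_nonneg.2 (min_le_min_left x (cumsum_mono hw n.le_succ))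

lemma greedyFill_le (hw : ∀ n, 0 ≤ w n) (x : ℝ) (n : ℕ) : greedyFill w x n ≤ w n := by
  have : min x (cumsum w n + w n) ≤ min x (cumsum w n) + w n :=
    (min_le_min_right _ (le_add_of_nonneg_right (hw n))).trans (min_add_add_right ..).le
  rw [greedyFill, cumsum_succ]
  linarith

variable {d : ℕ} {u ρ : ℕ → ℝ} {x : ℝ}

lemma greedyFill_sub_eq (n : ℕ) :
    greedyFill w x n - u n = slack w u x (n + 1) - slack w u x n := by
  simp only [greedyFill, slack, sum_range_succ]
  ring

lemma slack_zero (hx : 0 ≤ x) : slack w u x 0 = 0 := by simp [slack, hx]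

lemma slack_nonneg (hu0 : ∀ n, 0 ≤ u n) (hu : ∀ n, u n ≤ w n) (hx : ∑ n ∈ range d, u n = x)
    {n : ℕ} (hn : n ≤ d) : 0 ≤ slack w u x n :=
  sub_nonneg.2 <| le_min
    (hx ▸ sum_le_sum_of_subset_of_nonneg (range_subset_range.2 hn) fun k _ _ => hu0 k)
    (sum_le_sum fun k _ => hu k)

lemma slack_eq_zero (hx : ∑ n ∈ range d, u n = x) (hxC : x ≤ cumsum w d) :
    slack w u x d = 0 := by
  simp [slack, min_eq_left hxC, hx]

lemma sum_greedyFill_sub_mul (hx0 : 0 ≤ x) (hx : ∑ n ∈ range d, u n = x)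
    (hxC : x ≤ cumsum w d) :
    ∑ n ∈ range d, (greedyFill w x n - u n) * ρ n =
      ∑ n ∈ range (d - 1), (ρ n - ρ (n + 1)) * slack w u x (n + 1) := by
  have hpart : ∀ m, ∑ k ∈ range m, (greedyFill w x k - u k) = slack w u x m := fun m => by
    simp only [greedyFill_sub_eq, sum_range_sub, slack_zero hx0, sub_zero]
  have := sum_range_by_parts ρ (fun n => greedyFill w x n - u n) d
  simp only [smul_eq_mul, hpart, slack_eq_zero hx hxC, mul_zero, zero_sub] at this
  rw [sum_congr rfl fun n _ => mul_comm _ _, this, ← sum_neg_distrib]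
  exact sum_congr rfl fun n _ => by ring

lemma slack_term_nonneg (hρ : ∀ n, n + 1 < d → ρ (n + 1) ≤ ρ n) (hu0 : ∀ n, 0 ≤ u n)
    (hu : ∀ n, u n ≤ w n) (hx : ∑ n ∈ range d, u n = x) {n : ℕ} (hn : n ∈ range (d - 1)) :
    0 ≤ (ρ n - ρ (n + 1)) * slack w u x (n + 1) := by
  have := mem_range.1 hn
  exact mul_nonneg (sub_nonneg.2 (hρ n (by omega))) (slack_nonneg hu0 hu hx (by omega))

theorem sum_mul_le_sum_greedyFill_mul (hρ : ∀ n, n + 1 < d → ρ (n + 1) ≤ ρ n)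
    (hu0 : ∀ n, 0 ≤ u n) (hu : ∀ n, u n ≤ w n) (hx : ∑ n ∈ range d, u n = x)
    (hxC : x ≤ cumsum w d) :
    ∑ n ∈ range d, u n * ρ n ≤ ∑ n ∈ range d, greedyFill w x n * ρ n := by
  have hx0 : 0 ≤ x := hx ▸ sum_nonneg fun n _ => hu0 n
  rw [← sub_nonneg, ← sum_sub_distrib]
  simp_rw [← sub_mul]
  rw [sum_greedyFill_sub_mul hx0 hx hxC]
  exact sum_nonneg fun n hn => slack_term_nonneg hρ hu0 hu hx hn

theorem eq_greedyFill_of_sum_mul_eq (hρ : ∀ n, n + 1 < d → ρ (n + 1) < ρ n)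
    (hu0 : ∀ n, 0 ≤ u n) (hu : ∀ n, u n ≤ w n) (hx : ∑ n ∈ range d, u n = x)
    (hxC : x ≤ cumsum w d)
    (heq : ∑ n ∈ range d, u n * ρ n = ∑ n ∈ range d, greedyFill w x n * ρ n) {n : ℕ}
    (hn : n < d) : u n = greedyFill w x n := by
  have hx0 : 0 ≤ x := hx ▸ sum_nonneg fun n _ => hu0 n
  have hsum : ∑ n ∈ range (d - 1), (ρ n - ρ (n + 1)) * slack w u x (n + 1) = 0 := by
    rw [← sum_greedyFill_sub_mul hx0 hx hxC]
    simp_rw [sub_mul]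
    rw [sum_sub_distrib, heq, sub_self]
  have hterm := (sum_eq_zero_iff_of_nonneg fun k hk =>
    slack_term_nonneg (fun n hn => (hρ n hn).le) hu0 hu hx hk).1 hsum
  have hslack : ∀ m ≤ d, slack w u x m = 0 := by
    intro m hm
    rcases Nat.eq_zero_or_pos m with rfl | hm0
    · exact slack_zero hx0
    rcases hm.lt_or_eq with hmd | rfl
    · obtain ⟨k, rfl⟩ := Nat.exists_eq_add_of_le' hm0
      have := hterm k (mem_range.2 (by omega))
      exact (mul_eq_zero.1 this).resolve_left (sub_pos.2 (hρ k hmd)).ne'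
    · exact slack_eq_zero hx hxC
  linarith [greedyFill_sub_eq (w := w) (u := u) (x := x) n, hslack n hn.le, hslack (n + 1) hn]

end Knapsack

section PermSeq

variable {d : ℕ} (σ : Equiv.Perm (Fin d))

def permSeq (v : Fin d → ℝ) (n : ℕ) : ℝ := if h : n < d then v (σ ⟨n, h⟩) else 0

variable {σ} {v : Fin d → ℝ}

@[simp] lemma permSeq_coe (v : Fin d → ℝ) (b : Fin d) : permSeq σ v b = v (σ b) := by
  simp [permSeq]

lemma permSeq_of_le {n : ℕ} (h : d ≤ n) : permSeq σ v n = 0 := by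
  simp [permSeq, h]

lemma permSeq_nonneg (hv : ∀ i, 0 ≤ v i) (n : ℕ) : 0 ≤ permSeq σ v n := by
  unfold permSeq; split_ifs <;> simp [hv]

lemma permSeq_le_permSeq {v' : Fin d → ℝ} (h : ∀ i, v i ≤ v' i) (n : ℕ) :
    permSeq σ v n ≤ permSeq σ v' n := by
  unfold permSeq; split_ifs <;> simp [h]

lemma permSeq_mul_comp_symm (f : ℕ → ℝ) (v : Fin d → ℝ) (n : ℕ) :
    permSeq σ (fun j => f (σ.symm j) * v j) n = f n * permSeq σ v n := by
  unfold permSeq; split_ifs <;> simp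

lemma sum_eq_sum_range_permSeq (σ : Equiv.Perm (Fin d)) (v : Fin d → ℝ) :
    ∑ i, v i = ∑ n ∈ range d, permSeq σ v n := by
  rw [← Equiv.sum_comp σ v, ← Fin.sum_univ_eq_sum_range]
  simp

lemma sum_comp_symm_eq_sum_range (σ : Equiv.Perm (Fin d)) (f : ℕ → ℝ) :
    ∑ i, f (σ.symm i) = ∑ n ∈ range d, f n := by
  rw [Equiv.sum_comp σ.symm (fun b : Fin d => f b), Fin.sum_univ_eq_sum_range]

lemma cumsum_permSeq_of_le {n : ℕ} (hn : d ≤ n) : cumsum (permSeq σ v) n = ∑ i, v i := by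
  rw [sum_eq_sum_range_permSeq σ, cumsum, ← sum_range_add_sum_Ico _ hn,
    sum_eq_zero fun k hk => permSeq_of_le (mem_Ico.1 hk).1, add_zero]

lemma cumsum_permSeq_le (hv : ∀ i, 0 ≤ v i) (n : ℕ) : cumsum (permSeq σ v) n ≤ ∑ i, v i :=
  cumsum_permSeq_of_le (σ := σ) (le_max_right n d) ▸
    cumsum_mono (permSeq_nonneg hv) (le_max_left n d)

lemma sum_Iic_eq_cumsum_permSeq (k : Fin d) :
    ∑ i ∈ Iic k, v (σ i) = cumsum (permSeq σ v) (k + 1) := by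
  rw [cumsum, Nat.range_succ_eq_Iic, ← Fin.map_valEmbedding_Iic, sum_map]
  simp

variable (σ) in
def prefixIndicator (m : ℕ) : Fin d → ℝ := fun i => if (σ.symm i : ℕ) < m then 1 else 0

lemma prefixIndicator_dotProduct {m : ℕ} (hm : m ≤ d) (v : Fin d → ℝ) :
    prefixIndicator σ m ⬝ᵥ v = cumsum (permSeq σ v) m := by
  simp only [dotProduct, prefixIndicator]
  rw [sum_eq_sum_range_permSeq σ, ← sum_range_add_sum_Ico _ hm, cumsum]
  simp only [permSeq_mul_comp_symm (fun n => if n < m then (1 : ℝ) else 0)]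
  rw [sum_eq_zero (s := Ico m d) fun n hn => by rw [if_neg (mem_Ico.1 hn).1.not_gt, zero_mul],
    add_zero]
  exact sum_congr rfl fun n hn => by rw [if_pos (mem_range.1 hn), one_mul]

end PermSeq

section Curve

variable {d : ℕ} {s p : Fin d → ℝ} {σ : Equiv.Perm (Fin d)}

lemma permSeq_slope_succ_le (hβ : IsBetaOrder d s p σ) {n : ℕ} (hn : n + 1 < d) :
    permSeq σ (fun i => p i / s i) (n + 1) ≤ permSeq σ (fun i => p i / s i) n := by
  simpa [permSeq, hn, Nat.lt_of_succ_lt hn] using hβ ⟨n, by omega⟩ ⟨n + 1, hn⟩ (by simp)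

lemma permSeq_slope_succ_lt (hβ : IsBetaOrder d s p σ)
    (hdist : ∀ i j : Fin d, i ≠ j → p i / s i ≠ p j / s j) {n : ℕ} (hn : n + 1 < d) :
    permSeq σ (fun i => p i / s i) (n + 1) < permSeq σ (fun i => p i / s i) n := by
  refine (permSeq_slope_succ_le hβ hn).lt_of_ne ?_
  simpa [permSeq, hn, Nat.lt_of_succ_lt hn] using hdist _ _ (σ.injective.ne (by simp))

lemma sum_mul_eq_sum_range_permSeq (hs : ∀ i, 0 < s i) (σ : Equiv.Perm (Fin d))
    (lam : Fin d → ℝ) :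
    ∑ i, lam i * p i = ∑ n ∈ range d,
      permSeq σ (fun i => lam i * s i) n * permSeq σ (fun i => p i / s i) n := by
  rw [sum_eq_sum_range_permSeq σ]
  refine sum_congr rfl fun n _ => ?_
  unfold permSeq
  split_ifs
  · field_simp [(hs _).ne']
  · simp

lemma permSeq_feasible (hs : ∀ i, 0 < s i) {lam : Fin d → ℝ} (hlam : ∀ i, lam i ∈ Set.Icc 0 1)
    {x : ℝ} (hx : ∑ i, lam i * s i = x) :
    (∀ n, 0 ≤ permSeq σ (fun i => lam i * s i) n) ∧
      (∀ n, permSeq σ (fun i => lam i * s i) n ≤ permSeq σ s n) ∧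
      ∑ n ∈ range d, permSeq σ (fun i => lam i * s i) n = x :=
  ⟨permSeq_nonneg fun i => mul_nonneg (hlam i).1 (hs i).le,
    permSeq_le_permSeq fun i => mul_le_of_le_one_left (hs i).le (hlam i).2,
    (sum_eq_sum_range_permSeq σ _).symm.trans hx⟩

theorem curve_eq_sum_greedyFill (hs : ∀ i, 0 < s i) (hβ : IsBetaOrder d s p σ) {x : ℝ}
    (hx0 : 0 ≤ x) (hxZ : x ≤ ∑ i, s i) :
    curve d s p x = ∑ n ∈ range d,
      greedyFill (permSeq σ s) x n * permSeq σ (fun i => p i / s i) n := by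
  have hC : cumsum (permSeq σ s) d = ∑ i, s i := cumsum_permSeq_of_le le_rfl
  have hw : ∀ n, 0 ≤ permSeq σ s n := permSeq_nonneg fun i => (hs i).le
  refine IsGreatest.csSup_eq ⟨⟨fun i => greedyFill (permSeq σ s) x (σ.symm i) / s i,
    fun i => ⟨?_, ?_⟩, ?_, ?_⟩, ?_⟩
  · exact div_nonneg (greedyFill_nonneg hw _ _) (hs i).le
  · rw [div_le_one (hs i)]
    simpa using greedyFill_le hw x (σ.symm i)
  · simp only [div_mul_cancel₀ _ (hs _).ne']
    rw [sum_comp_symm_eq_sum_range, sum_greedyFill hx0, hC, min_eq_left hxZ]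
  · simp only [div_mul_eq_mul_div, mul_div_assoc, ← sum_eq_sum_range_permSeq σ,
      ← permSeq_mul_comp_symm]
  · rintro y ⟨lam, hlam, hx, rfl⟩
    obtain ⟨hu0, hu, hu_sum⟩ := permSeq_feasible (σ := σ) hs hlam hx
    rw [sum_mul_eq_sum_range_permSeq hs σ]
    exact sum_mul_le_sum_greedyFill_mul (fun n hn => permSeq_slope_succ_le hβ hn) hu0 hu hu_sum
      (hC ▸ hx ▸ hxZ)

theorem mul_eq_greedyFill_of_curve_eq (hs : ∀ i, 0 < s i) (hβ : IsBetaOrder d s p σ)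
    (hdist : ∀ i j : Fin d, i ≠ j → p i / s i ≠ p j / s j) {lam : Fin d → ℝ}
    (hlam : ∀ i, lam i ∈ Set.Icc 0 1) {x : ℝ} (hx : ∑ i, lam i * s i = x)
    (hxZ : x ≤ ∑ i, s i) (hval : ∑ i, lam i * p i = curve d s p x) (b : Fin d) :
    lam (σ b) * s (σ b) = greedyFill (permSeq σ s) x b := by
  obtain ⟨hu0, hu, hu_sum⟩ := permSeq_feasible (σ := σ) hs hlam hx
  have hx0 : 0 ≤ x := hu_sum ▸ sum_nonneg fun n _ => hu0 n
  rw [curve_eq_sum_greedyFill hs hβ hx0 hxZ, sum_mul_eq_sum_range_permSeq hs σ] at hval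
  simpa using eq_greedyFill_of_sum_mul_eq (fun n hn => permSeq_slope_succ_lt hβ hdist hn)
    hu0 hu hu_sum (cumsum_permSeq_of_le (σ := σ) le_rfl ▸ hxZ) hval b.isLt

end Curve

section Overlap

variable {w₁ w₂ : ℕ → ℝ}

/-- Second mixed difference of `(m, n) ↦ min (cumsum w₁ m) (cumsum w₂ n)`; by `overlap_eq` it is
the length of `[cumsum w₁ a, cumsum w₁ (a + 1)] ∩ [cumsum w₂ b, cumsum w₂ (b + 1)]`. -/
def overlap (w₁ w₂ : ℕ → ℝ) (a b : ℕ) : ℝ :=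
  greedyFill w₂ (cumsum w₁ (a + 1)) b - greedyFill w₂ (cumsum w₁ a) b

lemma overlap_eq (hw₁ : ∀ n, 0 ≤ w₁ n) (hw₂ : ∀ n, 0 ≤ w₂ n) (a b : ℕ) :
    overlap w₁ w₂ a b = max 0 (min (cumsum w₁ (a + 1)) (cumsum w₂ (b + 1)) -
      max (cumsum w₁ a) (cumsum w₂ b)) := by
  have h₁ := cumsum_mono hw₁ a.le_succ
  have h₂ := cumsum_mono hw₂ b.le_succ
  simp only [overlap, greedyFill]
  generalize cumsum w₁ a = u at *
  generalize cumsum w₁ (a + 1) = v at *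
  generalize cumsum w₂ b = c at *
  generalize cumsum w₂ (b + 1) = e at *
  rcases le_total u c with h3 | h3 <;> rcases le_total v e with h4 | h4 <;>
    rcases le_total u e with h5 | h5 <;> rcases le_total v c with h6 | h6 <;>
    simp only [min_def, max_def] <;> split_ifs <;> linarith

lemma overlap_comm (a b : ℕ) : overlap w₁ w₂ a b = overlap w₂ w₁ b a := by
  simp only [overlap, greedyFill, min_comm (cumsum w₁ _)]
  ring

lemma overlap_nonneg (hw₁ : ∀ n, 0 ≤ w₁ n) (hw₂ : ∀ n, 0 ≤ w₂ n) (a b : ℕ) :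
    0 ≤ overlap w₁ w₂ a b :=
  overlap_eq hw₁ hw₂ a b ▸ le_max_left _ _

lemma lt_of_overlap_ne_zero (hw₁ : ∀ n, 0 ≤ w₁ n) (hw₂ : ∀ n, 0 ≤ w₂ n) {a b : ℕ}
    (h : overlap w₁ w₂ a b ≠ 0) :
    cumsum w₂ b < cumsum w₁ (a + 1) ∧ cumsum w₁ a < cumsum w₂ (b + 1) := by
  rw [overlap_eq hw₁ hw₂] at h
  have : max (cumsum w₁ a) (cumsum w₂ b) < min (cumsum w₁ (a + 1)) (cumsum w₂ (b + 1)) := by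
    by_contra! hle
    exact h (max_eq_left (by linarith))
  exact ⟨(le_max_right _ _).trans_lt (this.trans_le (min_le_left _ _)),
    (le_max_left _ _).trans_lt (this.trans_le (min_le_right _ _))⟩

lemma sum_overlap (hw₁ : ∀ n, 0 ≤ w₁ n) {d a : ℕ}
    (h : cumsum w₁ (a + 1) ≤ cumsum w₂ d) :
    ∑ b ∈ range d, overlap w₁ w₂ a b = w₁ a := by
  simp only [overlap, sum_sub_distrib, sum_greedyFill (cumsum_nonneg hw₁ _)]
  rw [min_eq_left h, min_eq_left ((cumsum_mono hw₁ a.le_succ).trans h), cumsum_succ]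
  ring

def prefixSum₂ (N : ℕ → ℕ → ℝ) (m n : ℕ) : ℝ := ∑ a ∈ range m, ∑ b ∈ range n, N a b

lemma eq_prefixSum₂_sub (N : ℕ → ℕ → ℝ) (a b : ℕ) :
    N a b = prefixSum₂ N (a + 1) (b + 1) - prefixSum₂ N a (b + 1) - prefixSum₂ N (a + 1) b +
      prefixSum₂ N a b := by
  simp only [prefixSum₂, sum_range_succ]
  ring

variable {d : ℕ} {N : ℕ → ℕ → ℝ}

lemma eq_overlap_of_prefixSum₂_eq
    (h : ∀ m n, m ≤ d → n ≤ d → prefixSum₂ N m n = min (cumsum w₁ m) (cumsum w₂ n))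
    {a b : ℕ} (ha : a < d) (hb : b < d) : N a b = overlap w₁ w₂ a b := by
  rw [eq_prefixSum₂_sub N a b, h _ _ ha hb, h _ _ ha.le hb, h _ _ ha hb.le, h _ _ ha.le hb.le]
  simp only [overlap, greedyFill]
  ring

/-- Row `a < m` of `N` vanishes from column `n` on, because its support ends before
`cumsum w₁ m ≤ cumsum w₂ n`. -/
lemma prefixSum₂_eq_cumsum (hw₁ : ∀ n, 0 ≤ w₁ n) (hw₂ : ∀ n, 0 ≤ w₂ n)
    (hrow : ∀ a < d, ∑ b ∈ range d, N a b = w₁ a)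
    (hsupp : ∀ a b, a < d → b < d → N a b ≠ 0 → cumsum w₂ b < cumsum w₁ (a + 1))
    {m n : ℕ} (hm : m ≤ d) (hn : n ≤ d) (hle : cumsum w₁ m ≤ cumsum w₂ n) :
    prefixSum₂ N m n = cumsum w₁ m := by
  refine sum_congr rfl fun a ha => ?_
  have ha : a < m := mem_range.1 ha
  rw [← hrow a (by omega), ← sum_range_add_sum_Ico _ hn, left_eq_add]
  refine sum_eq_zero fun b hb => ?_
  obtain ⟨hnb, hbd⟩ := mem_Ico.1 hb
  by_contra hN
  have := hsupp a b (by omega) hbd hN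
  linarith [cumsum_mono hw₁ (show a + 1 ≤ m by omega), cumsum_mono hw₂ hnb]

lemma prefixSum₂_eq_min (hw₁ : ∀ n, 0 ≤ w₁ n) (hw₂ : ∀ n, 0 ≤ w₂ n)
    (hrow : ∀ a < d, ∑ b ∈ range d, N a b = w₁ a) (hcol : ∀ b < d, ∑ a ∈ range d, N a b = w₂ b)
    (hsupp : ∀ a b, a < d → b < d → N a b ≠ 0 →
      cumsum w₂ b < cumsum w₁ (a + 1) ∧ cumsum w₁ a < cumsum w₂ (b + 1))
    {m n : ℕ} (hm : m ≤ d) (hn : n ≤ d) :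
    prefixSum₂ N m n = min (cumsum w₁ m) (cumsum w₂ n) := by
  rcases le_total (cumsum w₁ m) (cumsum w₂ n) with hle | hle
  · rw [min_eq_left hle]
    exact prefixSum₂_eq_cumsum hw₁ hw₂ hrow (fun a b ha hb h => (hsupp a b ha hb h).1) hm hn hle
  · rw [min_eq_right hle, prefixSum₂, sum_comm]
    exact prefixSum₂_eq_cumsum (N := fun b a => N a b) hw₂ hw₁ hcol
      (fun b a hb ha h => (hsupp a b ha hb h).2) hn hm hle

end Overlap

section Staircase

variable {d : ℕ} {s : Fin d → ℝ} (σout σin : Equiv.Perm (Fin d))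

lemma permSeq_sum {ι : Type*} (t : Finset ι) (f : ι → Fin d → ℝ) (n : ℕ) :
    permSeq σout (fun i => ∑ k ∈ t, f k i) n = ∑ k ∈ t, permSeq σout (f k) n := by
  unfold permSeq; split_ifs <;> simp

def permArray (N : Matrix (Fin d) (Fin d) ℝ) (a b : ℕ) : ℝ :=
  permSeq σout (fun i => permSeq σin (N i) b) a

@[simp] lemma permArray_coe (N : Matrix (Fin d) (Fin d) ℝ) (a b : Fin d) :
    permArray σout σin N a b = N (σout a) (σin b) := by
  simp [permArray]

lemma permArray_coe_right (N : Matrix (Fin d) (Fin d) ℝ) (a : ℕ) (b : Fin d) :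
    permArray σout σin N a b = permSeq σout (fun i => N i (σin b)) a := by
  simp [permArray]

lemma sum_permArray_row {N : Matrix (Fin d) (Fin d) ℝ} (hN : ∀ i, ∑ j, N i j = s i) (a : ℕ) :
    ∑ b ∈ range d, permArray σout σin N a b = permSeq σout s a := by
  simp only [permArray, ← permSeq_sum, ← sum_eq_sum_range_permSeq, hN]

lemma sum_permArray_col {N : Matrix (Fin d) (Fin d) ℝ} (hN : ∀ j, ∑ i, N i j = s j) (b : ℕ) :
    ∑ a ∈ range d, permArray σout σin N a b = permSeq σin s b := by
  simp only [permArray, ← sum_eq_sum_range_permSeq]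
  exact (permSeq_sum σin univ (fun i j => N i j) b).symm.trans (by simp only [hN])

variable (s)

/-- The North-West corner coupling of `s` with itself: the rows cut `[0, ∑ s]` into consecutive
intervals of lengths `s i` in the order `σout`, the columns in the order `σin`, and each entry is
the length of the intersection of its row and column intervals. -/
def staircase : Matrix (Fin d) (Fin d) ℝ :=
  fun i j => overlap (permSeq σout s) (permSeq σin s) (σout.symm i) (σin.symm j)

variable {s σout σin}

@[simp] lemma staircase_apply_apply (a b : Fin d) :
    staircase s σout σin (σout a) (σin b) = overlap (permSeq σout s) (permSeq σin s) a b := by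
  simp [staircase]

lemma staircase_mem (hs : ∀ i, 0 ≤ s i) : staircase s σout σin ∈ TransportPolytope d d s s := by
  have hw : ∀ σ : Equiv.Perm (Fin d), ∀ n, 0 ≤ permSeq σ s n := fun _ => permSeq_nonneg hs
  have hsum : ∀ σ σ' : Equiv.Perm (Fin d), ∀ i,
      ∑ j, overlap (permSeq σ s) (permSeq σ' s) (σ.symm i) (σ'.symm j) = s i := fun σ σ' i => by
    have hle : cumsum (permSeq σ s) ((σ.symm i : ℕ) + 1) ≤ cumsum (permSeq σ' s) d :=
      cumsum_permSeq_of_le (σ := σ') le_rfl ▸ cumsum_permSeq_le hs _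
    rw [sum_comp_symm_eq_sum_range σ' (overlap _ _ _), sum_overlap (hw σ) hle, permSeq_coe,
      σ.apply_symm_apply]
  refine ⟨fun i j => overlap_nonneg (hw _) (hw _) _ _, hsum σout σin, fun j => ?_⟩
  simp only [staircase, overlap_comm (w₁ := permSeq σout s)]
  exact hsum σin σout j

lemma staircase_biplanar (hs : ∀ i, 0 ≤ s i) :
    BiplanarWithOrders d d (staircase s σout σin) σin σout := by
  have hw : ∀ σ : Equiv.Perm (Fin d), ∀ n, 0 ≤ permSeq σ s n := fun _ => permSeq_nonneg hs
  intro i i' j j' _ h h' hcross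
  obtain ⟨h1, h2⟩ := lt_of_overlap_ne_zero (hw _) (hw _) h
  obtain ⟨h1', h2'⟩ := lt_of_overlap_ne_zero (hw _) (hw _) h'
  have hmono := fun σ => cumsum_mono (w := permSeq σ s) (hw σ)
  rcases mul_neg_iff.1 hcross with ⟨ha, hb⟩ | ⟨ha, hb⟩
  · have ha : (σout.symm i' : ℕ) + 1 ≤ σout.symm i := by omega
    have hb : (σin.symm j : ℕ) + 1 ≤ σin.symm j' := by omega
    linarith [hmono σout ha, hmono σin hb]
  · have ha : (σout.symm i : ℕ) + 1 ≤ σout.symm i' := by omega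
    have hb : (σin.symm j' : ℕ) + 1 ≤ σin.symm j := by omega
    linarith [hmono σout ha, hmono σin hb]

lemma eq_staircase_of_prefixSum₂_eq {N : Matrix (Fin d) (Fin d) ℝ}
    (h : ∀ m n, m ≤ d → n ≤ d → prefixSum₂ (permArray σout σin N) m n =
      min (cumsum (permSeq σout s) m) (cumsum (permSeq σin s) n)) :
    N = staircase s σout σin := by
  ext i j
  obtain ⟨a, rfl⟩ := σout.surjective i
  obtain ⟨b, rfl⟩ := σin.surjective j
  rw [← permArray_coe σout σin N a b, eq_overlap_of_prefixSum₂_eq h a.isLt b.isLt,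
    staircase_apply_apply]

lemma eq_staircase_of_support (hs : ∀ i, 0 ≤ s i) {N : Matrix (Fin d) (Fin d) ℝ}
    (hN : N ∈ TransportPolytope d d s s)
    (hsupp : ∀ i j, staircase s σout σin i j = 0 → N i j = 0) :
    N = staircase s σout σin := by
  have hw : ∀ σ : Equiv.Perm (Fin d), ∀ n, 0 ≤ permSeq σ s n := fun _ => permSeq_nonneg hs
  refine eq_staircase_of_prefixSum₂_eq fun m n hm hn => prefixSum₂_eq_min (hw _) (hw _)
    (fun a _ => sum_permArray_row σout σin hN.2.1 a)
    (fun b _ => sum_permArray_col σout σin hN.2.2 b) (fun a b ha hb hne => ?_) hm hn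
  refine lt_of_overlap_ne_zero (hw _) (hw _) fun h0 => hne ?_
  lift a to Fin d using ha
  lift b to Fin d using hb
  rw [permArray_coe]
  exact hsupp _ _ (by rw [staircase_apply_apply, h0])

/-- A point of an open segment between nonnegative matrices vanishes only where both endpoints
do, so `eq_staircase_of_support` applies to the endpoints. -/
lemma staircase_mem_extremePoints (hs : ∀ i, 0 ≤ s i) :
    staircase s σout σin ∈ Set.extremePoints ℝ (TransportPolytope d d s s) := by
  refine ⟨staircase_mem hs, fun A hA B hB ⟨α, β, hα, hβ, _, hAB⟩ => ?_⟩
  refine eq_staircase_of_support hs hA fun i j h0 => ?_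
  have hij : α * A i j + β * B i j = 0 := by
    rw [← h0, ← hAB]
    rfl
  have := (add_eq_zero_iff_of_nonneg (mul_nonneg hα.le (hA.1 i j))
    (mul_nonneg hβ.le (hB.1 i j))).1 hij
  exact (mul_eq_zero.1 this.1).resolve_left hα.ne'

end Staircase

section ThermalProcess

variable {d : ℕ} {s : Fin d → ℝ}

open Matrix

theorem mul_diagonal_mem_transportPolytope_iff (hs : ∀ i, 0 < s i) {T : Matrix (Fin d) (Fin d) ℝ} :
    T * diagonal s ∈ TransportPolytope d d s s ↔ T ∈ TP d s := by
  have hrow : ∀ i, (∑ j, T i j * s j = s i ↔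
      T.mulVec (fun i => s i / ∑ k, s k) i = s i / ∑ k, s k) := fun i => by
    have hZ : ∑ k, s k ≠ 0 := (sum_pos (fun k _ => hs k) ⟨i, mem_univ i⟩).ne'
    simp only [mulVec, dotProduct, mul_div_assoc', ← sum_div, div_left_inj' hZ]
  have hcol : ∀ j, (∑ i, T i j * s j = s j ↔ ∑ i, T i j = 1) := fun j => by
    rw [← sum_mul, mul_eq_right₀ (hs j).ne']
  simp only [TransportPolytope, TP, Set.mem_ofPred_eq, mul_diagonal,
    mul_nonneg_iff_of_pos_right (hs _), hrow, hcol, funext_iff]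
  tauto

lemma mulVec_weights_of_mem_TP {T : Matrix (Fin d) (Fin d) ℝ} (hs : ∀ i, 0 < s i)
    (hT : T ∈ TP d s) :
    T.mulVec s = s := by
  funext i
  simpa [mul_diagonal, mulVec, dotProduct] using
    ((mul_diagonal_mem_transportPolytope_iff hs).2 hT).2.1 i

lemma mul_diagonal_injective (hs : ∀ i, 0 < s i) :
    Function.Injective fun T : Matrix (Fin d) (Fin d) ℝ => T * diagonal s := fun T T' h => by
  ext i j
  simpa [mul_diagonal, (hs j).ne'] using congrFun (congrFun h i) j

variable (s) (σout σin : Equiv.Perm (Fin d))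

noncomputable def staircaseTP : Matrix (Fin d) (Fin d) ℝ :=
  fun i j => staircase s σout σin i j / s j

variable {s σout σin}

lemma staircaseTP_mul_diagonal (hs : ∀ i, 0 < s i) :
    staircaseTP s σout σin * diagonal s = staircase s σout σin := by
  ext i j
  simp [staircaseTP, mul_diagonal, (hs j).ne']

lemma staircaseTP_mem (hs : ∀ i, 0 < s i) : staircaseTP s σout σin ∈ TP d s :=
  (mul_diagonal_mem_transportPolytope_iff hs).1
    (staircaseTP_mul_diagonal hs ▸ staircase_mem fun i => (hs i).le)

lemma staircaseTP_mem_extremePoints (hs : ∀ i, 0 < s i) :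
    staircaseTP s σout σin ∈ Set.extremePoints ℝ (TP d s) :=
  Set.mem_extremePoints_of_injective (f := LinearMap.mulRight ℝ (diagonal s))
    (mul_diagonal_injective hs) (fun _ hT => (mul_diagonal_mem_transportPolytope_iff hs).2 hT)
    (staircaseTP_mem hs)
    (by simpa [staircaseTP_mul_diagonal hs] using staircase_mem_extremePoints fun i => (hs i).le)

end ThermalProcess

section Transport

variable {d : ℕ} {s p r : Fin d → ℝ} {σout σin : Equiv.Perm (Fin d)}

open Matrix

lemma curve_zero (hs : ∀ i, 0 < s i) (hβ : IsBetaOrder d s p σin) : curve d s p 0 = 0 := by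
  rw [curve_eq_sum_greedyFill hs hβ le_rfl (sum_nonneg fun i _ => (hs i).le)]
  simp [greedyFill, cumsum_nonneg (permSeq_nonneg fun i => (hs i).le)]

lemma curve_sum (hs : ∀ i, 0 < s i) (hβ : IsBetaOrder d s p σin) :
    curve d s p (∑ i, s i) = ∑ i, p i := by
  have hw := permSeq_nonneg (σ := σin) fun i => (hs i).le
  rw [curve_eq_sum_greedyFill hs hβ (sum_nonneg fun i _ => (hs i).le) le_rfl,
    ← one_mul (∑ i, p i), mul_sum, sum_mul_eq_sum_range_permSeq hs σin]
  refine sum_congr rfl fun n _ => ?_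
  rw [greedyFill, min_eq_right (cumsum_permSeq_le (fun i => (hs i).le) _),
    min_eq_right (cumsum_permSeq_le (fun i => (hs i).le) _), cumsum_succ, add_sub_cancel_left]
  simp

lemma curve_cumsum_eq_cumsum (hs : ∀ i, 0 < s i) (hβ : IsBetaOrder d s p σin)
    (hpr : ∑ i, p i = ∑ i, r i)
    (helbow : ∀ k : Fin d, (k : ℕ) + 1 < d →
      curve d s p (∑ i ∈ Iic k, s (σout i)) = ∑ i ∈ Iic k, r (σout i))
    {n : ℕ} (hn : n ≤ d) :
    curve d s p (cumsum (permSeq σout s) n) = cumsum (permSeq σout r) n := by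
  rcases Nat.eq_zero_or_pos n with rfl | hn0
  · simpa using curve_zero hs hβ
  rcases hn.lt_or_eq with hnd | rfl
  · obtain ⟨k, rfl⟩ := Nat.exists_eq_add_of_le' hn0
    simpa only [sum_Iic_eq_cumsum_permSeq] using helbow ⟨k, by omega⟩ hnd
  · rw [cumsum_permSeq_of_le le_rfl, cumsum_permSeq_of_le le_rfl, curve_sum hs hβ, hpr]

variable (hs : ∀ i, 0 < s i) (hβ : IsBetaOrder d s p σin)
  (hcurve : ∀ n ≤ d, curve d s p (cumsum (permSeq σout s) n) = cumsum (permSeq σout r) n)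
include hs hβ hcurve

/-- Row `σout a` of the staircase process collects the increment of the curve over the `a`-th
interval of `σout`, which the elbow condition identifies with `r (σout a)`. -/
theorem staircaseTP_mulVec : (staircaseTP s σout σin).mulVec p = r := by
  funext i
  obtain ⟨a, rfl⟩ := σout.surjective i
  have hC : ∀ n, cumsum (permSeq σout s) n ≤ ∑ i, s i :=
    cumsum_permSeq_le fun i => (hs i).le
  have hC0 : ∀ n, 0 ≤ cumsum (permSeq σout s) n :=
    cumsum_nonneg (permSeq_nonneg fun i => (hs i).le)
  calc (staircaseTP s σout σin).mulVec p (σout a)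
      = ∑ b ∈ range d, overlap (permSeq σout s) (permSeq σin s) a b *
          permSeq σin (fun j => p j / s j) b := by
        simp only [mulVec, dotProduct, staircaseTP, staircase, Equiv.symm_apply_apply,
          div_mul_eq_mul_div, mul_div_assoc, sum_eq_sum_range_permSeq σin,
          permSeq_mul_comp_symm (overlap (permSeq σout s) (permSeq σin s) a)]
    _ = curve d s p (cumsum (permSeq σout s) (a + 1)) -
          curve d s p (cumsum (permSeq σout s) a) := by
        rw [curve_eq_sum_greedyFill hs hβ (hC0 _) (hC _),
          curve_eq_sum_greedyFill hs hβ (hC0 _) (hC _), ← sum_sub_distrib]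
        simp only [overlap, sub_mul]
    _ = r (σout a) := by
        rw [hcurve _ a.isLt, hcurve _ a.isLt.le, cumsum_succ, permSeq_coe, add_sub_cancel_left]

/-- Summing the first `m` rows (in the order `σout`) of a thermal process `T` with `T p = r`
gives a feasible `lam` for the curve at `cumsum (permSeq σout s) m` attaining its value, hence the
greedy one. -/
lemma sum_permArray_eq_greedyFill (hdist : ∀ i j : Fin d, i ≠ j → p i / s i ≠ p j / s j)
    {T : Matrix (Fin d) (Fin d) ℝ} (hT : T ∈ TP d s) (hTp : T.mulVec p = r) {m : ℕ} (hm : m ≤ d)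
    (b : Fin d) :
    ∑ a ∈ range m, permArray σout σin (T * diagonal s) a b =
      greedyFill (permSeq σin s) (cumsum (permSeq σout s) m) b := by
  set lam := vecMul (prefixIndicator σout m) T
  have hlam : ∀ j, lam j ∈ Set.Icc 0 1 := fun j => by
    have he : ∀ i, prefixIndicator σout m i ∈ Set.Icc (0 : ℝ) 1 := fun i => by
      unfold prefixIndicator; split_ifs <;> simp
    have hlam_j : lam j = ∑ i, prefixIndicator σout m i * T i j := rfl
    rw [hlam_j, ← hT.2.1 j]
    exact ⟨sum_nonneg fun i _ => mul_nonneg (he i).1 (hT.1 i j),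
      sum_le_sum fun i _ => mul_le_of_le_one_left (hT.1 i j) (he i).2⟩
  have hsum : ∀ v, ∑ j, lam j * v j = cumsum (permSeq σout (T.mulVec v)) m := fun v => by
    rw [← prefixIndicator_dotProduct hm, dotProduct_mulVec]
    rfl
  have hx := hsum s
  rw [mulVec_weights_of_mem_TP hs hT] at hx
  have hval := hsum p
  rw [hTp, ← hcurve m hm] at hval
  rw [← mul_eq_greedyFill_of_curve_eq hs hβ hdist hlam hx
    (cumsum_permSeq_le (fun i => (hs i).le) m) hval b, ← cumsum]
  simp only [permArray_coe_right, mul_diagonal]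
  rw [← prefixIndicator_dotProduct hm]
  simp only [lam, vecMul, dotProduct, sum_mul, mul_assoc]

theorem eq_staircaseTP_of_mulVec_eq (hdist : ∀ i j : Fin d, i ≠ j → p i / s i ≠ p j / s j)
    {T : Matrix (Fin d) (Fin d) ℝ} (hT : T ∈ TP d s) (hTp : T.mulVec p = r) :
    T = staircaseTP s σout σin := by
  refine mul_diagonal_injective hs ?_
  simp only [staircaseTP_mul_diagonal hs]
  refine eq_staircase_of_prefixSum₂_eq fun m n hm hn => ?_
  rw [prefixSum₂, sum_comm,
    ← sum_greedyFill (cumsum_nonneg (permSeq_nonneg fun i => (hs i).le) m)]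
  refine sum_congr rfl fun b hb => ?_
  lift b to Fin d using (mem_range.1 hb).trans_le hn
  exact sum_permArray_eq_greedyFill hs hβ hcurve hdist hT hTp hm b

end Transport

lemma exists_isBetaOrder {d : ℕ} (s p : Fin d → ℝ) : ∃ σ, IsBetaOrder d s p σ :=
  ⟨Tuple.sort fun i => -(p i / s i), fun _ _ hij =>
    neg_le_neg_iff.1 (Tuple.monotone_sort (fun i => -(p i / s i)) hij)⟩

end Thermomajorization

open Thermomajorization in
theorem stmt15_general (d : ℕ) (s : Fin d → ℝ) (hs : ∀ i, 0 < s i)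
    (p r : Fin d → ℝ) (hp : ProbVec d p) (hr : ProbVec d r)
    (htight : TightlyThermomajorizes d s p r) :
    ∃ T ∈ TP d s, T.mulVec p = r ∧
      (∃ πin πout : Equiv.Perm (Fin d),
        IsBetaOrder d s p πin ∧ IsBetaOrder d s r πout ∧
        IsBiplanarExtremalTP d s T πin πout) ∧
      ((∀ i j : Fin d, i ≠ j → p i / s i ≠ p j / s j) →
        ∀ T' ∈ TP d s, T'.mulVec p = r → T' = T) := by
  obtain ⟨-, σout, hβr, helbow⟩ := htight
  obtain ⟨σin, hβp⟩ := exists_isBetaOrder s p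
  have hcurve := fun n (hn : n ≤ d) =>
    curve_cumsum_eq_cumsum hs hβp (hp.2.trans hr.2.symm) helbow hn
  refine ⟨staircaseTP s σout σin, staircaseTP_mem hs, staircaseTP_mulVec hs hβp hcurve,
    ⟨σin, σout, hβp, hβr, staircaseTP_mem_extremePoints hs, ?_, ?_⟩,
    fun hdist T hT hTp => eq_staircaseTP_of_mulVec_eq hs hβp hcurve hdist hT hTp⟩
  all_goals rw [staircaseTP_mul_diagonal hs]
  · exact staircase_mem_extremePoints fun i => (hs i).le
  · exact staircase_biplanar fun i => (hs i).le

/-- if `p` tightly thermomajorizes `r`, then there is a thermal process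
`T` with `T p = r` which is an extreme point of `TP(d,s)` and a biplanar extremal
thermal process with orders `(π_in, π_out)`, where `π_in` is a β-order of `p` and
`π_out` a β-order of `r`; if moreover all slopes of `f_p` are different, `T` is the
unique thermal process mapping `p` to `r`. -/
theorem stmt15 (d : ℕ) (hd : 1 ≤ d) (s : Fin d → ℝ) (hs : ∀ i, 0 < s i)
    (p r : Fin d → ℝ) (hp : ProbVec d p) (hr : ProbVec d r)
    (htight : TightlyThermomajorizes d s p r) :
    ∃ T ∈ TP d s, T.mulVec p = r ∧
      (∃ πin πout : Equiv.Perm (Fin d),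
        IsBetaOrder d s p πin ∧ IsBetaOrder d s r πout ∧
        IsBiplanarExtremalTP d s T πin πout) ∧
      ((∀ i j : Fin d, i ≠ j → p i / s i ≠ p j / s j) →
        ∀ T' ∈ TP d s, T'.mulVec p = r → T' = T) :=
  stmt15_general d s hs p r hp hr htight
end

section
/- Let T be a biplanar extremal thermal process with orders (π_in, π_out). Then for every probability vector p having π_in as a β-order, the vector T p is an extreme point of p^TP and π_out is a β-order of T p. If moreover all slopes of f_p are different, then T is the unique thermal process mapping p to T p. -/
/-!
Reorder the rows of `T * diagonal s` by `π_out` and its columns by `π_in`. Biplanarity says that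
the support of the reordered matrix `N` is a staircase, so `N` is the north-west corner coupling:
each corner sum of `N` is the minimum of the corresponding row and column prefix sums of `s`,
the largest value any coupling in `T(s,s)` can take there. As `p / s` decreases along `π_in`,
summation by parts turns this into: for every `k`, the sum of the first `k` entries (in the order
`π_out`) of `T' p` is maximal for `T' = T`; when the slopes are distinct, equality for all `k`
forces equal corner sums, hence `T' = T`. So `T p` dominates `p^TP` for a separating family of
linear functionals and is extreme. The β-order of `T p` is read off the staircase directly.
-/

open Finset Matrix

lemma sum_range_mul_sub_eq {f D : ℕ → ℝ} {n : ℕ} (h0 : D 0 = 0) (hn : D n = 0) :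
    ∑ i ∈ range n, f i * (D (i + 1) - D i) =
      ∑ i ∈ range (n - 1), (f i - f (i + 1)) * D (i + 1) := by
  have := sum_range_by_parts f (fun i => D (i + 1) - D i) n
  simp only [smul_eq_mul, sum_range_sub, h0, hn, sub_zero, mul_zero, zero_sub] at this
  rw [this, ← sum_neg_distrib]
  exact sum_congr rfl fun i _ => by ring

section PrefixSum

variable {n : ℕ}

def prefixSum (k : ℕ) : (Fin n → ℝ) →ₗ[ℝ] ℝ :=
  ∑ i : Fin n with i.val < k, LinearMap.proj i

@[simp]
lemma prefixSum_apply (k : ℕ) (x : Fin n → ℝ) :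
    prefixSum k x = ∑ i : Fin n with i.val < k, x i := by
  simp [prefixSum]

lemma prefixSum_zero (x : Fin n → ℝ) : prefixSum 0 x = 0 := by simp

lemma prefixSum_succ (x : Fin n → ℝ) (i : Fin n) :
    prefixSum (i + 1) x = prefixSum i x + x i := by
  have : univ.filter (fun j : Fin n => j.val < i + 1) =
      insert i (univ.filter fun j : Fin n => j.val < i) := by
    ext j
    simp [le_iff_eq_or_lt, Fin.val_inj]
  rw [prefixSum_apply, this, sum_insert (by simp), add_comm, prefixSum_apply]

lemma prefixSum_of_le (x : Fin n → ℝ) {k : ℕ} (hk : n ≤ k) :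
    prefixSum k x = ∑ i, x i := by
  simp [filter_true_of_mem fun (i : Fin n) _ => i.isLt.trans_le hk]

lemma eq_of_prefixSum_eq {x y : Fin n → ℝ} (h : ∀ k, prefixSum k x = prefixSum k y) :
    x = y := by
  funext i
  have := h (i + 1)
  rw [prefixSum_succ, prefixSum_succ, h i] at this
  exact add_left_cancel this

lemma sum_mul_eq_sum_range_prefixSum {x : Fin n → ℝ} (hx : ∑ i, x i = 0) (ρ : ℕ → ℝ) :
    ∑ i : Fin n, x i * ρ i =
      ∑ i ∈ range (n - 1), (ρ i - ρ (i + 1)) * prefixSum (i + 1) x := by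
  rw [← sum_range_mul_sub_eq (D := fun k => prefixSum k x) (prefixSum_zero x)
    (by rw [prefixSum_of_le x le_rfl, hx]), ← Fin.sum_univ_eq_sum_range]
  simp_rw [prefixSum_succ, add_sub_cancel_left, mul_comm]

lemma sum_mul_sub_sum_mul_eq {w w' ρ : Fin n → ℝ} (htot : ∑ i, w' i = ∑ i, w i) :
    ∑ i, w i * ρ i - ∑ i, w' i * ρ i = ∑ i ∈ range (n - 1),
      (Function.extend Fin.val ρ 0 i - Function.extend Fin.val ρ 0 (i + 1)) *
        (prefixSum (i + 1) w - prefixSum (i + 1) w') := by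
  have hx : ∑ i, (w - w') i = 0 := by simp [sum_sub_distrib, htot]
  simp_rw [← sum_sub_distrib, ← sub_mul, ← map_sub]
  rw [← sum_mul_eq_sum_range_prefixSum hx]
  simp [Fin.val_injective.extend_apply]

lemma extend_val_sub_extend_val (ρ : Fin n → ℝ) {i : ℕ} (hi : i ∈ range (n - 1)) :
    Function.extend Fin.val ρ 0 i - Function.extend Fin.val ρ 0 (i + 1) =
      ρ ⟨i, by grind⟩ - ρ ⟨i + 1, by grind⟩ := by
  rw [Fin.val_injective.extend_apply _ _ (⟨i + 1, by grind⟩ : Fin n),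
    Fin.val_injective.extend_apply _ _ (⟨i, by grind⟩ : Fin n)]

lemma sum_mul_le_sum_mul_of_prefixSum_le {w w' ρ : Fin n → ℝ} (hρ : Antitone ρ)
    (hle : ∀ k, prefixSum k w' ≤ prefixSum k w) (htot : ∑ i, w' i = ∑ i, w i) :
    ∑ i, w' i * ρ i ≤ ∑ i, w i * ρ i := by
  rw [← sub_nonneg, sum_mul_sub_sum_mul_eq htot]
  refine sum_nonneg fun i hi => mul_nonneg ?_ (sub_nonneg.2 (hle _))
  rw [extend_val_sub_extend_val ρ hi, sub_nonneg]
  exact hρ (Fin.mk_le_mk.2 (Nat.le_succ i))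

lemma eq_of_sum_mul_eq_of_prefixSum_le {w w' ρ : Fin n → ℝ} (hρ : StrictAnti ρ)
    (hle : ∀ k, prefixSum k w' ≤ prefixSum k w) (htot : ∑ i, w' i = ∑ i, w i)
    (heq : ∑ i, w' i * ρ i = ∑ i, w i * ρ i) : w' = w := by
  have hpos : ∀ i ∈ range (n - 1),
      0 < Function.extend Fin.val ρ 0 i - Function.extend Fin.val ρ 0 (i + 1) := fun i hi => by
    rw [extend_val_sub_extend_val ρ hi, sub_pos]
    exact hρ (Fin.mk_lt_mk.2 (Nat.lt_succ_self i))
  have hzero := sum_mul_sub_sum_mul_eq (ρ := ρ) htot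
  rw [heq, sub_self, eq_comm, sum_eq_zero_iff_of_nonneg fun i hi =>
    mul_nonneg (hpos i hi).le (sub_nonneg.2 (hle _))] at hzero
  refine eq_of_prefixSum_eq fun k => ?_
  rcases Nat.lt_or_ge k n with hk | hk
  · rcases k with _ | k
    · simp
    have hk' : k ∈ range (n - 1) := mem_range.2 (by omega)
    linarith [sub_eq_zero.1 ((mul_eq_zero.1 (hzero k hk')).resolve_left (hpos k hk').ne')]
  · rw [prefixSum_of_le _ hk, prefixSum_of_le _ hk, htot]

end PrefixSum

section TransportPolytope

variable {m n : ℕ} {N N' : Matrix (Fin m) (Fin n) ℝ} {r : Fin m → ℝ} {c : Fin n → ℝ}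

lemma transpose_mem_transportPolytope (hN : N ∈ TransportPolytope m n r c) :
    Nᵀ ∈ TransportPolytope n m c r :=
  ⟨fun j i => hN.1 i j, hN.2.2, hN.2.1⟩

lemma submatrix_mem_transportPolytope (hN : N ∈ TransportPolytope m n r c)
    (e : Equiv.Perm (Fin m)) (f : Equiv.Perm (Fin n)) :
    N.submatrix e f ∈ TransportPolytope m n (r ∘ e) (c ∘ f) :=
  ⟨fun _ _ => hN.1 _ _, fun a => by simp [Equiv.sum_comp f (N (e a)), hN.2.1],
    fun b => by simp [Equiv.sum_comp e (N · (f b)), hN.2.2]⟩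

def cornerSum (N : Matrix (Fin m) (Fin n) ℝ) (k l : ℕ) : ℝ :=
  ∑ a : Fin m with a.val < k, ∑ b : Fin n with b.val < l, N a b

lemma cornerSum_transpose (N : Matrix (Fin m) (Fin n) ℝ) (k l : ℕ) :
    cornerSum Nᵀ l k = cornerSum N k l :=
  sum_comm

lemma prefixSum_eq_cornerSum_add (hr : ∀ a, ∑ b, N a b = r a) (k l : ℕ) :
    prefixSum k r = cornerSum N k l +
      ∑ a : Fin m with a.val < k, ∑ b : Fin n with ¬ b.val < l, N a b := by
  simp only [prefixSum_apply, cornerSum, ← sum_add_distrib, sum_filter_add_sum_filter_not, hr]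

lemma cornerSum_le_prefixSum (hN : N ∈ TransportPolytope m n r c) (k l : ℕ) :
    cornerSum N k l ≤ prefixSum k r := by
  rw [prefixSum_eq_cornerSum_add hN.2.1 k l, le_add_iff_nonneg_right]
  exact sum_nonneg fun a _ => sum_nonneg fun b _ => hN.1 a b

lemma exists_ne_zero_of_cornerSum_lt (hr : ∀ a, ∑ b, N a b = r a) {k l : ℕ}
    (h : cornerSum N k l < prefixSum k r) : ∃ a b, a.val < k ∧ l ≤ b.val ∧ N a b ≠ 0 := by
  rw [prefixSum_eq_cornerSum_add hr k l, lt_add_iff_pos_right] at h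
  obtain ⟨a, ha, hab⟩ := exists_ne_zero_of_sum_ne_zero h.ne'
  obtain ⟨b, hb, hab⟩ := exists_ne_zero_of_sum_ne_zero hab
  exact ⟨a, b, (mem_filter.1 ha).2, not_lt.1 (mem_filter.1 hb).2, hab⟩

lemma cornerSum_le_min (hN : N ∈ TransportPolytope m n r c) (k l : ℕ) :
    cornerSum N k l ≤ min (prefixSum k r) (prefixSum l c) :=
  le_min (cornerSum_le_prefixSum hN k l)
    (cornerSum_transpose N k l ▸ cornerSum_le_prefixSum (transpose_mem_transportPolytope hN) l k)

def Noncrossing (N : Matrix (Fin m) (Fin n) ℝ) : Prop :=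
  ∀ ⦃a a' : Fin m⦄ ⦃b b' : Fin n⦄, a < a' → b' < b → N a b ≠ 0 → N a' b' = 0

lemma cornerSum_eq_min_of_noncrossing (hN : N ∈ TransportPolytope m n r c)
    (hNc : Noncrossing N) (k l : ℕ) :
    cornerSum N k l = min (prefixSum k r) (prefixSum l c) := by
  refine (cornerSum_le_min hN k l).antisymm (not_lt.1 fun h => ?_)
  obtain ⟨a, b, ha, hb, hab⟩ :=
    exists_ne_zero_of_cornerSum_lt hN.2.1 (h.trans_le (min_le_left _ _))
  obtain ⟨b', a', hb', ha', hab'⟩ := exists_ne_zero_of_cornerSum_lt (N := Nᵀ) hN.2.2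
    (by rw [cornerSum_transpose]; exact h.trans_le (min_le_right _ _))
  exact hab' (hNc (Fin.lt_def.2 (by omega)) (Fin.lt_def.2 (by omega)) hab)

lemma prefixSum_mulVec (N : Matrix (Fin m) (Fin n) ℝ) (ρ : Fin n → ℝ) (k : ℕ) :
    prefixSum k (N *ᵥ ρ) = ∑ b, prefixSum k (Nᵀ b) * ρ b := by
  simp only [prefixSum_apply, mulVec, dotProduct, transpose_apply, sum_mul]
  exact sum_comm

lemma prefixSum_prefixSum_transpose (N : Matrix (Fin m) (Fin n) ℝ) (k l : ℕ) :
    prefixSum l (fun b => prefixSum k (Nᵀ b)) = cornerSum N k l := by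
  simp only [prefixSum_apply, cornerSum, transpose_apply]
  exact sum_comm

lemma sum_prefixSum_transpose (hr : ∀ a, ∑ b, N a b = r a) (k : ℕ) :
    ∑ b, prefixSum k (Nᵀ b) = prefixSum k r := by
  simp only [prefixSum_apply, transpose_apply]
  rw [sum_comm]
  exact sum_congr rfl fun a _ => hr a

lemma prefixSum_prefixSum_transpose_le (hN : N ∈ TransportPolytope m n r c)
    (hNc : Noncrossing N) (hN' : N' ∈ TransportPolytope m n r c) (k l : ℕ) :
    prefixSum l (fun b => prefixSum k (N'ᵀ b)) ≤
      prefixSum l (fun b => prefixSum k (Nᵀ b)) := by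
  rw [prefixSum_prefixSum_transpose, prefixSum_prefixSum_transpose,
    cornerSum_eq_min_of_noncrossing hN hNc]
  exact cornerSum_le_min hN' k l

theorem prefixSum_mulVec_le_of_noncrossing (hN : N ∈ TransportPolytope m n r c)
    (hNc : Noncrossing N) (hN' : N' ∈ TransportPolytope m n r c) {ρ : Fin n → ℝ}
    (hρ : Antitone ρ) (k : ℕ) : prefixSum k (N' *ᵥ ρ) ≤ prefixSum k (N *ᵥ ρ) := by
  rw [prefixSum_mulVec, prefixSum_mulVec]
  exact sum_mul_le_sum_mul_of_prefixSum_le hρ (prefixSum_prefixSum_transpose_le hN hNc hN' k)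
    (by rw [sum_prefixSum_transpose hN'.2.1, sum_prefixSum_transpose hN.2.1])

theorem eq_of_mulVec_eq_of_noncrossing (hN : N ∈ TransportPolytope m n r c)
    (hNc : Noncrossing N) (hN' : N' ∈ TransportPolytope m n r c) {ρ : Fin n → ℝ}
    (hρ : StrictAnti ρ) (h : N' *ᵥ ρ = N *ᵥ ρ) : N' = N := by
  have hcol (k : ℕ) : (fun b => prefixSum k (N'ᵀ b)) = fun b => prefixSum k (Nᵀ b) :=
    eq_of_sum_mul_eq_of_prefixSum_le hρ (prefixSum_prefixSum_transpose_le hN hNc hN' k)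
      (by rw [sum_prefixSum_transpose hN'.2.1, sum_prefixSum_transpose hN.2.1])
      (by rw [← prefixSum_mulVec, ← prefixSum_mulVec, h])
  exact transpose_injective (funext fun b => eq_of_prefixSum_eq fun k => congrFun (hcol k) b)

lemma mul_sum_le_mulVec {ρ : Fin n → ℝ} {a : Fin m} {t : ℝ} (h0 : ∀ b, 0 ≤ N a b)
    (h : ∀ b, N a b ≠ 0 → t ≤ ρ b) : t * ∑ b, N a b ≤ (N *ᵥ ρ) a := by
  rw [mul_sum, mulVec, dotProduct]
  refine sum_le_sum fun b _ => ?_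
  rcases eq_or_ne (N a b) 0 with hb | hb
  · simp [hb]
  · rw [mul_comm t]
    exact mul_le_mul_of_nonneg_left (h b hb) (h0 b)

lemma mulVec_le_mul_sum {ρ : Fin n → ℝ} {a : Fin m} {t : ℝ} (h0 : ∀ b, 0 ≤ N a b)
    (h : ∀ b, N a b ≠ 0 → ρ b ≤ t) : (N *ᵥ ρ) a ≤ t * ∑ b, N a b := by
  simpa [mulVec_neg, neg_mul] using
    mul_sum_le_mulVec (ρ := -ρ) (t := -t) h0 fun b hb => neg_le_neg (h b hb)

theorem antitone_mulVec_div_of_noncrossing (hN : N ∈ TransportPolytope m n r c)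
    (hr : ∀ a, 0 < r a) (hNc : Noncrossing N) {ρ : Fin n → ℝ} (hρ : Antitone ρ) :
    Antitone fun a => (N *ᵥ ρ) a / r a := by
  intro a a' haa'
  rcases haa'.eq_or_lt with rfl | hlt
  · rfl
  obtain ⟨b₀, hb₀, hmax⟩ : ∃ b₀ ∈ univ.filter (N a · ≠ 0),
      ∀ b ∈ univ.filter (N a · ≠ 0), b ≤ b₀ := by
    obtain ⟨b, -, hb⟩ := exists_ne_zero_of_sum_ne_zero ((hN.2.1 a).symm ▸ (hr a).ne')
    exact exists_max_image _ id ⟨b, by simpa⟩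
  simp only [mem_filter, mem_univ, true_and] at hb₀ hmax
  have hlow : ρ b₀ * r a ≤ (N *ᵥ ρ) a :=
    hN.2.1 a ▸ mul_sum_le_mulVec (hN.1 a) fun b hb => hρ (hmax b hb)
  have hupp : (N *ᵥ ρ) a' ≤ ρ b₀ * r a' :=
    hN.2.1 a' ▸ mulVec_le_mul_sum (hN.1 a') fun b hb =>
      hρ (not_lt.1 fun hlt' => hb (hNc hlt hlt' hb₀))
  calc (N *ᵥ ρ) a' / r a' ≤ ρ b₀ := (div_le_iff₀ (hr a')).2 hupp
    _ ≤ (N *ᵥ ρ) a / r a := (le_div_iff₀ (hr a)).2 hlow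

end TransportPolytope

theorem mem_extremePoints_of_forall_le {E ι : Type*} [AddCommGroup E] [Module ℝ E]
    {A : Set E} {x : E} (hx : x ∈ A) (φ : ι → E →ₗ[ℝ] ℝ) (hle : ∀ y ∈ A, ∀ i, φ i y ≤ φ i x)
    (hsep : ∀ y, (∀ i, φ i y = φ i x) → y = x) : x ∈ A.extremePoints ℝ := by
  refine ⟨hx, fun y hy z hz ⟨a, b, ha, hb, hab, hxyz⟩ =>
    hsep y fun i => (hle y hy i).antisymm ?_⟩
  have hcomb := congrArg (φ i) hxyz
  rw [map_add, map_smul, map_smul, smul_eq_mul, smul_eq_mul] at hcomb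
  obtain rfl : b = 1 - a := by linarith
  by_contra! hlt
  linarith [mul_lt_mul_of_pos_left hlt ha, mul_le_mul_of_nonneg_left (hle z hz i) hb.le]

section ThermalProcess

variable {m n : ℕ}

lemma mul_diagonal_mem_transportPolytope {d : ℕ} {s : Fin d → ℝ} (hs : ∀ i, 0 < s i)
    {T : Matrix (Fin d) (Fin d) ℝ} (hT : T ∈ TP d s) :
    T * diagonal s ∈ TransportPolytope d d s s := by
  refine ⟨fun i j => ?_, fun i => ?_, fun j => ?_⟩
  · simpa [mul_diagonal] using mul_nonneg (hT.1 i j) (hs j).le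
  · have hZ : ∑ k, s k ≠ 0 := (sum_pos (fun k _ => hs k) ⟨i, mem_univ i⟩).ne'
    have := congrFun hT.2.2 i
    simp only [mulVec, dotProduct, mul_div_assoc', ← sum_div, div_left_inj' hZ] at this
    simpa [mul_diagonal] using this
  · simp [mul_diagonal, ← sum_mul, hT.2.1 j]

lemma BiplanarWithOrders.noncrossing_submatrix {M : Matrix (Fin m) (Fin n) ℝ}
    {πin : Equiv.Perm (Fin n)} {πout : Equiv.Perm (Fin m)}
    (h : BiplanarWithOrders m n M πin πout) : Noncrossing (M.submatrix πout πin) := by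
  intro a a' b b' ha hb hab
  by_contra hab'
  refine h (πout a) (πout a') (πin b) (πin b') (by simp [ha.ne]) hab hab' ?_
  simp only [Equiv.symm_apply_apply]
  exact mul_neg_of_neg_of_pos (sub_neg.2 (by exact_mod_cast ha))
    (sub_pos.2 (by exact_mod_cast hb))

lemma mulVec_comp_eq_submatrix_mulVec {s : Fin n → ℝ} (hs : ∀ i, s i ≠ 0)
    (T : Matrix (Fin m) (Fin n) ℝ) (p : Fin n → ℝ) (πin : Equiv.Perm (Fin n))
    (πout : Equiv.Perm (Fin m)) :
    (T *ᵥ p) ∘ πout =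
      (T * diagonal s).submatrix πout πin *ᵥ fun b => p (πin b) / s (πin b) := by
  rw [submatrix_mulVec_equiv, ← mulVec_mulVec]
  congr 2
  funext i
  simp [mulVec_diagonal, mul_div_cancel₀ _ (hs i)]

lemma eq_of_submatrix_mul_diagonal_eq {s : Fin n → ℝ} (hs : ∀ i, s i ≠ 0)
    {T T' : Matrix (Fin m) (Fin n) ℝ} {e : Equiv.Perm (Fin m)} {f : Equiv.Perm (Fin n)}
    (h : (T' * diagonal s).submatrix e f = (T * diagonal s).submatrix e f) : T' = T := by
  ext i j
  simpa [mul_diagonal, hs] using congrFun₂ h (e.symm i) (f.symm j)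

end ThermalProcess

theorem stmt16_general (d : ℕ) (s : Fin d → ℝ) (hs : ∀ i, 0 < s i)
    (T : Matrix (Fin d) (Fin d) ℝ) (πin πout : Equiv.Perm (Fin d))
    (hT : IsBiplanarExtremalTP d s T πin πout)
    (p : Fin d → ℝ) (hord : IsBetaOrder d s p πin) :
    T.mulVec p ∈ Set.extremePoints ℝ (achievable d s p) ∧
    IsBetaOrder d s (T.mulVec p) πout ∧
    ((∀ i j : Fin d, i ≠ j → p i / s i ≠ p j / s j) →
      ∀ T' ∈ TP d s, T'.mulVec p = T.mulVec p → T' = T) := by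
  obtain ⟨⟨hTP, -⟩, -, hbip⟩ := hT
  set ρ : Fin d → ℝ := fun b => p (πin b) / s (πin b)
  have hρ : Antitone ρ := fun i j hij => hord i j hij
  have hmem {T'} (hT' : T' ∈ TP d s) :=
    submatrix_mem_transportPolytope (mul_diagonal_mem_transportPolytope hs hT') πout πin
  have hcomp (T' : Matrix (Fin d) (Fin d) ℝ) :=
    mulVec_comp_eq_submatrix_mulVec (fun i => (hs i).ne') T' p πin πout
  have hnc := hbip.noncrossing_submatrix
  refine ⟨?_, fun i j hij => ?_, fun hdist T' hT' hq => ?_⟩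
  · refine mem_extremePoints_of_forall_le ⟨T, hTP, rfl⟩
      (fun k => (prefixSum k).comp (LinearMap.funLeft ℝ ℝ πout)) ?_ ?_
    · rintro _ ⟨T', hT', rfl⟩ k
      have := prefixSum_mulVec_le_of_noncrossing (hmem hTP) hnc (hmem hT') hρ k
      rwa [← hcomp, ← hcomp] at this
    · exact fun q hq => πout.surjective.injective_comp_right (eq_of_prefixSum_eq hq)
  · have := antitone_mulVec_div_of_noncrossing (hmem hTP) (fun a => hs (πout a)) hnc hρ hij
    rwa [← hcomp] at this
  · have hρ' : StrictAnti ρ :=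
      hρ.strictAnti_of_injective fun i j h => πin.injective (not_imp_not.1 (hdist _ _) h)
    refine eq_of_submatrix_mul_diagonal_eq (fun i => (hs i).ne')
      (eq_of_mulVec_eq_of_noncrossing (hmem hTP) hnc (hmem hT') hρ' ?_)
    rw [← hcomp, ← hcomp, hq]

/-- if `T` is a biplanar extremal thermal process with orders
`(π_in, π_out)`, then for every probability vector `p` having `π_in` as a β-order,
`T p` is an extreme point of `p^TP` with β-order `π_out`; if all slopes of `f_p` are
different, `T` is the unique thermal process mapping `p` to `T p`. -/
theorem stmt16 (d : ℕ) (hd : 1 ≤ d) (s : Fin d → ℝ) (hs : ∀ i, 0 < s i)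
    (T : Matrix (Fin d) (Fin d) ℝ) (πin πout : Equiv.Perm (Fin d))
    (hT : IsBiplanarExtremalTP d s T πin πout)
    (p : Fin d → ℝ) (hp : ProbVec d p) (hord : IsBetaOrder d s p πin) :
    T.mulVec p ∈ Set.extremePoints ℝ (achievable d s p) ∧
    IsBetaOrder d s (T.mulVec p) πout ∧
    ((∀ i j : Fin d, i ≠ j → p i / s i ≠ p j / s j) →
      ∀ T' ∈ TP d s, T'.mulVec p = T.mulVec p → T' = T) :=
  stmt16_general d s hs T πin πout hT p hord
end

section
/- For d = 2 and s = (1, q) with 0 < q ≤ 1, the set of thermal processes is exactly TP(2,s) = { (1−α)·I + α·B : α ∈ [0,1] }, where I is the 2×2 identity matrix and B is the matrix with rows (1−q, 1) and (q, 0); in particular, I and B are the only extreme points of TP(2,s). -/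
open Matrix Set

theorem extremePoints_segment {𝕜 E : Type*} [Field 𝕜] [LinearOrder 𝕜] [IsStrictOrderedRing 𝕜]
    [AddCommGroup E] [Module 𝕜 E] (x y : E) :
    (segment 𝕜 x y).extremePoints 𝕜 = {x, y} := by
  refine subset_antisymm (by rw [← convexHull_pair]; exact extremePoints_convexHull_subset) ?_
  suffices h : ∀ x y : E, x ∈ (segment 𝕜 x y).extremePoints 𝕜 by
    rintro z (rfl | rfl)
    · exact h z y
    · rw [segment_symm]; exact h z x
  intro x y
  refine ⟨left_mem_segment 𝕜 x y, ?_⟩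
  rw [segment_eq_image']
  rintro _ ⟨s, ⟨hs0, -⟩, rfl⟩ _ ⟨t, ⟨ht0, -⟩, rfl⟩ ⟨a, b, ha, hb, hab, hx⟩
  have hcomb : (a * s + b * t) • (y - x) = 0 := by
    linear_combination (norm := module) hx - hab • x
  rcases smul_eq_zero.1 hcomb with h | h
  · have hs : s = 0 := by nlinarith [mul_nonneg ha.le hs0, mul_nonneg hb.le ht0]
    simp [hs]
  · simp [h]

theorem mulVec_div_sum_eq_iff {ι : Type*} [Fintype ι] (T : Matrix ι ι ℝ) {s : ι → ℝ}
    (hs : ∑ k, s k ≠ 0) :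
    T *ᵥ (fun i => s i / ∑ k, s k) = (fun i => s i / ∑ k, s k) ↔ T *ᵥ s = s := by
  have hscale : (fun i => s i / ∑ k, s k) = (∑ k, s k)⁻¹ • s := by
    ext i; simp [div_eq_inv_mul]
  rw [hscale, mulVec_smul, smul_right_inj (inv_ne_zero hs)]

theorem mem_TP_iff {d : ℕ} {s : Fin d → ℝ} (hs : ∑ k, s k ≠ 0) (T : Matrix (Fin d) (Fin d) ℝ) :
    T ∈ TP d s ↔ (∀ i j, 0 ≤ T i j) ∧ (∀ j, ∑ i, T i j = 1) ∧ T *ᵥ s = s := by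
  rw [TP, mem_ofPred_eq, mulVec_div_sum_eq_iff T hs]

theorem mem_TP_two_iff {q : ℝ} (hq0 : 0 < q) (hq1 : q ≤ 1) (T : Matrix (Fin 2) (Fin 2) ℝ) :
    T ∈ TP 2 ![1, q] ↔ ∃ α ∈ Icc (0 : ℝ) 1, T = !![1 - α * q, α; α * q, 1 - α] := by
  rw [mem_TP_iff (by rw [Fin.sum_univ_two]; simp only [cons_val_zero, cons_val_one]; linarith)]
  constructor
  · rintro ⟨hnonneg, hcol, hfix⟩
    have hc0 := hcol 0
    have hc1 := hcol 1
    have hf0 := congrFun hfix 0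
    simp only [Fin.isValue, Fin.sum_univ_two, mulVec, dotProduct, cons_val_zero, mul_one,
      cons_val_one, cons_val_fin_one] at hc0 hc1 hf0
    refine ⟨T 0 1, ⟨hnonneg 0 1, by linarith [hnonneg 1 1]⟩, ?_⟩
    ext i j
    fin_cases i <;> fin_cases j <;> simp <;> linarith
  · rintro ⟨α, ⟨hα0, hα1⟩, rfl⟩
    refine ⟨?_, ?_, ?_⟩
    · intro i j
      fin_cases i <;> fin_cases j <;> simp <;> nlinarith
    · intro j
      fin_cases j <;> simp [Fin.sum_univ_two]
    · ext i
      fin_cases i <;> simp [mulVec, dotProduct, Fin.sum_univ_two]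
      ring

theorem TP_two_eq_segment {q : ℝ} (hq0 : 0 < q) (hq1 : q ≤ 1) :
    TP 2 ![1, q] = segment ℝ 1 (Matrix.of ![![1 - q, 1], ![q, 0]]) := by
  have hcombo : ∀ α : ℝ, (1 - α) • (1 : Matrix (Fin 2) (Fin 2) ℝ) +
      α • Matrix.of ![![1 - q, 1], ![q, 0]] = !![1 - α * q, α; α * q, 1 - α] := by
    intro α
    ext i j
    fin_cases i <;> fin_cases j <;> simp
    ring
  ext T
  simp only [mem_TP_two_iff hq0 hq1, segment_eq_image, mem_image, hcombo, eq_comm]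

/-- for `d = 2` and `s = (1, q)` with `0 < q ≤ 1`, the set of thermal
processes is exactly `{(1-α)·I + α·B : α ∈ [0,1]}` where `B = [[1-q, 1], [q, 0]]`;
in particular `I` and `B` are the only extreme points of `TP(2,s)`. -/
theorem stmt17 (q : ℝ) (hq0 : 0 < q) (hq1 : q ≤ 1) :
    TP 2 ![1, q] =
      {M : Matrix (Fin 2) (Fin 2) ℝ | ∃ α ∈ Set.Icc (0 : ℝ) 1,
        M = (1 - α) • (1 : Matrix (Fin 2) (Fin 2) ℝ) +
          α • (Matrix.of ![![1 - q, 1], ![q, 0]])} ∧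
    Set.extremePoints ℝ (TP 2 ![1, q]) =
      {(1 : Matrix (Fin 2) (Fin 2) ℝ), Matrix.of ![![1 - q, 1], ![q, 0]]} := by
  rw [TP_two_eq_segment hq0 hq1, extremePoints_segment]
  refine ⟨?_, rfl⟩
  ext M
  simp only [segment_eq_image, mem_image, mem_ofPred_eq, eq_comm]
end
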